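/- arXiv:2210.05897 — 4 statements merged into one kernel-verified Lean document; each statement's English description precedes it below -/
import Mathlib

section
/- Under Assumptions 1–3 (noise, connectivity, objective functions), for the dynamics X(t+1) = A(t)X(t) + β(t)E(t) − α(t)G(t) with nonnegative step sizes, for every optimal point x* ∈ X* and every t ≥ 1 it holds almost surely that E[‖x̄(t+1) − x*‖² | F_t] ≤ ‖x̄(t) − x*‖² + 2(β²(t)γ + α²(t)L²) + 4α(t)L·δ(t) − 2α(t)(f(x̄(t)) − f(x*)), where x̄(t) = rᵀX(t), δ(t) = ‖X(t) − 1x̄(t)‖_r, and f(x) = Σ_{i=1}^n r_i f_i(x). -/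
open MeasureTheory Filter
open scoped RealInnerProductSpace

section aux

variable {d : ℕ}

lemma aux_norm_sq_eq (v : EuclideanSpace ℝ (Fin d)) : ‖v‖ ^ 2 = ∑ k, (v k) ^ 2 := by
  rw [← real_inner_self_eq_norm_sq]
  simp only [PiLp.inner_apply, RCLike.inner_apply, conj_trivial, sq]

lemma aux_coord_sq_le (v : EuclideanSpace ℝ (Fin d)) (k : Fin d) : (v k) ^ 2 ≤ ‖v‖ ^ 2 := by
  rw [aux_norm_sq_eq]
  exact Finset.single_le_sum (f := fun i => (v i) ^ 2) (fun i _ => sq_nonneg _) (Finset.mem_univ k)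

lemma aux_weighted_sq {n : ℕ} (r : Fin n → ℝ) (hr : ∀ i, 0 ≤ r i) (hsum : ∑ i, r i = 1)
    (a : Fin n → ℝ) : (∑ i, r i * a i) ^ 2 ≤ ∑ i, r i * (a i) ^ 2 := by
  have h := Finset.sum_mul_sq_le_sq_mul_sq Finset.univ (fun i => Real.sqrt (r i))
    (fun i => Real.sqrt (r i) * a i)
  have h1 : ∀ i : Fin n, Real.sqrt (r i) * (Real.sqrt (r i) * a i) = r i * a i := by
    intro i; rw [← mul_assoc, Real.mul_self_sqrt (hr i)]
  have h2 : ∀ i : Fin n, Real.sqrt (r i) ^ 2 = r i := fun i => Real.sq_sqrt (hr i)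
  have h3 : ∀ i : Fin n, (Real.sqrt (r i) * a i) ^ 2 = r i * a i ^ 2 := by
    intro i; rw [mul_pow, h2]
  simp only [h1, h2, h3, hsum, one_mul] at h
  exact h

lemma aux_weighted_norm_sq_le {n : ℕ} (r : Fin n → ℝ) (hr : ∀ i, 0 ≤ r i)
    (hsum : ∑ i, r i = 1) (v : Fin n → EuclideanSpace ℝ (Fin d)) :
    ‖∑ i, r i • v i‖ ^ 2 ≤ ∑ i, r i * ‖v i‖ ^ 2 := by
  have h1 : ‖∑ i, r i • v i‖ ≤ ∑ i, r i * ‖v i‖ := by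
    refine (norm_sum_le _ _).trans_eq ?_
    refine Finset.sum_congr rfl fun i _ => ?_
    rw [norm_smul, Real.norm_eq_abs, abs_of_nonneg (hr i)]
  calc ‖∑ i, r i • v i‖ ^ 2 ≤ (∑ i, r i * ‖v i‖) ^ 2 := by
        apply pow_le_pow_left₀ (norm_nonneg _) h1
    _ ≤ _ := aux_weighted_sq r hr hsum _

lemma aux_exists_subgrad (f : EuclideanSpace ℝ (Fin d) → ℝ)
    (hf : ConvexOn ℝ Set.univ f) (q : EuclideanSpace ℝ (Fin d)) :
    ∃ v : EuclideanSpace ℝ (Fin d), ∀ y, f q + ⟪v, y - q⟫ ≤ f y := by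
  have hcont : Continuous f := by
    rw [← continuousOn_univ]
    exact hf.continuousOn isOpen_univ
  set S : Set (EuclideanSpace ℝ (Fin d) × ℝ) := {p | f p.1 < p.2} with hS
  have hSopen : IsOpen S := isOpen_lt (hcont.comp continuous_fst) continuous_snd
  have hSconv : Convex ℝ S := by
    rintro ⟨v₁, c₁⟩ h₁ ⟨v₂, c₂⟩ h₂ a b ha hb hab
    simp only [hS, Set.mem_setOf_eq, Prod.smul_mk, Prod.mk_add_mk, smul_eq_mul] at h₁ h₂ ⊢
    have hcv : f (a • v₁ + b • v₂) ≤ a * f v₁ + b * f v₂ :=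
      hf.2 (Set.mem_univ _) (Set.mem_univ _) ha hb hab
    have key : a * f v₁ + b * f v₂ < a * c₁ + b * c₂ := by
      rcases eq_or_lt_of_le ha with ha' | ha'
      · have hb1 : b = 1 := by linarith
        rw [← ha', hb1]; simpa using h₂
      · have h1' : a * f v₁ < a * c₁ := by nlinarith
        have h2' : b * f v₂ ≤ b * c₂ := by nlinarith
        linarith
    exact lt_of_le_of_lt hcv key
  have hdisj : Disjoint S {(q, f q)} := by
    rw [Set.disjoint_singleton_right]
    simp [hS]
  obtain ⟨ℓ, u, hlt, hge⟩ := geometric_hahn_banach_open hSconv hSopen (convex_singleton _) hdisj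
  have hq : u ≤ ℓ (q, f q) := hge _ rfl
  set m : ℝ := ℓ (0, 1) with hm
  have hdecomp : ∀ (v : EuclideanSpace ℝ (Fin d)) (c : ℝ), ℓ (v, c) = ℓ (v, 0) + c * m := by
    intro v c
    have hsplit : (v, c) = (v, (0 : ℝ)) + c • ((0 : EuclideanSpace ℝ (Fin d)), (1 : ℝ)) := by
      simp [Prod.ext_iff]
    rw [hsplit, map_add, ℓ.map_smul, smul_eq_mul]
  have hmneg : m < 0 := by
    have h1 : ℓ (q, f q + 1) < u := hlt _ (by simp [hS])
    rw [hdecomp] at h1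
    rw [hdecomp] at hq
    linarith
  have hmpos : 0 < -m := by linarith
  have hkey : ∀ v, ℓ (v, 0) + f v * m ≤ u := by
    intro v
    by_contra hcon
    push_neg at hcon
    set ε : ℝ := (ℓ (v, 0) + f v * m - u) / (-m) with hε
    have hεpos : 0 < ε := div_pos (by linarith) hmpos
    have h1 : ℓ (v, f v + ε) < u := hlt _ (by simp only [hS, Set.mem_setOf_eq]; linarith)
    rw [hdecomp] at h1
    have hεm : ε * m = -(ℓ (v, 0) + f v * m - u) := by
      rw [hε, div_mul_eq_mul_div, div_neg, mul_div_assoc, div_self hmneg.ne, mul_one]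
    nlinarith
  set φ : EuclideanSpace ℝ (Fin d) →L[ℝ] ℝ :=
    (-m)⁻¹ • (ℓ.comp (ContinuousLinearMap.inl ℝ _ ℝ)) with hφ
  refine ⟨(InnerProductSpace.toDual ℝ _).symm φ, fun y => ?_⟩
  rw [InnerProductSpace.toDual_symm_apply]
  have h1 := hkey y
  rw [hdecomp] at hq
  have h3 : φ (y - q) = (-m)⁻¹ * (ℓ (y, 0) - ℓ (q, 0)) := by
    simp only [hφ, ContinuousLinearMap.smul_apply, ContinuousLinearMap.comp_apply,
      ContinuousLinearMap.inl_apply, smul_eq_mul]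
    rw [show ((y - q : EuclideanSpace ℝ (Fin d)), (0 : ℝ)) = (y, (0:ℝ)) - (q, (0:ℝ)) by
      simp [Prod.ext_iff], map_sub]
  rw [h3]
  have h4 : ℓ (y, 0) - ℓ (q, 0) ≤ (f q - f y) * m := by linarith
  have h5 : (-m)⁻¹ * ((f q - f y) * m) = f y - f q := by
    rw [show (-m)⁻¹ * ((f q - f y) * m) = (f q - f y) * (m / -m) by ring, div_neg,
      div_self hmneg.ne]; ring
  have h6 : (-m)⁻¹ * (ℓ (y, 0) - ℓ (q, 0)) ≤ f y - f q := by
    calc (-m)⁻¹ * (ℓ (y, 0) - ℓ (q, 0)) ≤ (-m)⁻¹ * ((f q - f y) * m) := by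
          exact mul_le_mul_of_nonneg_left h4 (inv_nonneg.mpr hmpos.le)
      _ = f y - f q := h5
  linarith

lemma aux_lip (f : EuclideanSpace ℝ (Fin d) → ℝ) (hf : ConvexOn ℝ Set.univ f) (L : ℝ)
    (hb : ∀ p v : EuclideanSpace ℝ (Fin d), (∀ y, f p + ⟪v, y - p⟫ ≤ f y) → ‖v‖ < L)
    (p q : EuclideanSpace ℝ (Fin d)) : f q - f p ≤ L * ‖q - p‖ := by
  obtain ⟨v, hv⟩ := aux_exists_subgrad f hf q
  have hvL : ‖v‖ ≤ L := (hb q v hv).le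
  have h1 := hv p
  have h2 : |⟪v, p - q⟫| ≤ ‖v‖ * ‖p - q‖ := abs_real_inner_le_norm v (p - q)
  have h3 : ‖p - q‖ = ‖q - p‖ := norm_sub_rev _ _
  have h4 : ‖v‖ * ‖p - q‖ ≤ L * ‖p - q‖ :=
    mul_le_mul_of_nonneg_right hvL (norm_nonneg _)
  have h5 : -(‖v‖ * ‖p - q‖) ≤ ⟪v, p - q⟫ := neg_le_of_abs_le h2
  rw [h3] at h4 h5
  linarith [h1, h4, h5]

lemma aux_condexp_comp_zero {Ω : Type*} {m m0 : MeasurableSpace Ω} (hm : m ≤ m0)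
    (μ : Measure Ω) [IsFiniteMeasure μ]
    {E F : Type*} [NormedAddCommGroup E] [NormedSpace ℝ E] [CompleteSpace E]
    [NormedAddCommGroup F] [NormedSpace ℝ F] [CompleteSpace F]
    (T : E →L[ℝ] F) {f : Ω → E} (hf : Integrable f μ)
    (h : μ[f|m] =ᵐ[μ] 0) : μ[fun ω => T (f ω)|m] =ᵐ[μ] 0 := by
  have hTf : Integrable (fun ω => T (f ω)) μ := T.integrable_comp hf
  refine (ae_eq_condExp_of_forall_setIntegral_eq hm hTf
    (fun s _ _ => (integrable_zero _ _ _).integrableOn)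
    (fun s hs hμs => ?_)
    (StronglyMeasurable.aestronglyMeasurable stronglyMeasurable_const)).symm
  have hint : ∫ ω in s, f ω ∂μ = 0 := by
    rw [← setIntegral_condExp hm hf hs]
    calc ∫ ω in s, (μ[f|m]) ω ∂μ = ∫ _ in s, (0 : E) ∂μ :=
          integral_congr_ae (ae_restrict_of_ae h)
      _ = 0 := by simp
  rw [T.integral_comp_comm hf.integrableOn, hint]
  simp


lemma aux_sum_apply {d n : ℕ} (w : Fin n → EuclideanSpace ℝ (Fin d)) (k : Fin d) :
    (∑ i, w i) k = ∑ i, w i k := by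
  induction (Finset.univ : Finset (Fin n)) using Finset.induction with
  | empty => simp
  | @insert a s ha ih => simp [Finset.sum_insert ha, ih]

end aux

/-- The r-weighted average state `x̄ = rᵀX = ∑ i, r i • x i`. -/
noncomputable def xbar {n d : ℕ} (r : Fin n → ℝ)
    (xv : Fin n → EuclideanSpace ℝ (Fin d)) : EuclideanSpace ℝ (Fin d) :=
  ∑ i, r i • xv i

/-- The squared r-norm deviation from consensus: `‖X − 1x̄‖_r² = ∑ i, r i ‖x i − x̄‖²`. -/
noncomputable def devSq {n d : ℕ} (r : Fin n → ℝ)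
    (xv : Fin n → EuclideanSpace ℝ (Fin d)) : ℝ :=
  ∑ i, r i * ‖xv i - xbar r xv‖ ^ 2

set_option maxHeartbeats 1000000 in
theorem stmt_12 {Ω : Type*} {m0 : MeasurableSpace Ω} (μ : Measure Ω) [IsProbabilityMeasure μ]
    (n d : ℕ) (hn : 2 ≤ n)
    (r : Fin n → ℝ) (hr_pos : ∀ i, 0 < r i) (hr_sum : ∑ i, r i = 1)
    -- Assumption 3: local objective functions
    (f : Fin n → EuclideanSpace ℝ (Fin d) → ℝ)
    (hf_convex : ∀ i, ConvexOn ℝ Set.univ (f i))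
    (L : ℝ) (hL : 0 < L)
    (hf_subgrad_bound : ∀ (i : Fin n) (p v : EuclideanSpace ℝ (Fin d)),
      (∀ y, f i p + ⟪v, y - p⟫ ≤ f i y) → ‖v‖ < L)
    (hopt_nonempty : ∃ z : EuclideanSpace ℝ (Fin d),
      ∀ y, ∑ i, r i * f i z ≤ ∑ i, r i * f i y)
    -- Assumption 2: connectivity of the time-varying weight matrices
    (W : ℕ → Matrix (Fin n) (Fin n) ℝ) (η : ℝ) (hη : 0 < η) (B : ℕ) (hB : 1 ≤ B)
    (hW_nonneg : ∀ t i j, 0 ≤ W t i j)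
    (hW_row : ∀ t i, ∑ j, W t i j = 1)
    (hW_r : ∀ t j, ∑ i, r i * W t i j = r j)
    (hW_eta : ∀ t i j, W t i j ≠ 0 → η ≤ W t i j)
    (hW_conn : ∀ t : ℕ, ∀ a b : Fin n,
      Relation.ReflTransGen
        (fun u v : Fin n => ∃ k, t + 1 ≤ k ∧ k ≤ t + B ∧ 0 < W k v u) a b)
    -- nonnegative step sizes
    (α β : ℕ → ℝ) (hα_nonneg : ∀ t, 0 ≤ α t) (hβ_nonneg : ∀ t, 0 ≤ β t)
    -- the stochastic processes: states, noise, subgradients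
    (F : Filtration ℕ m0)
    (x e g : ℕ → Ω → Fin n → EuclideanSpace ℝ (Fin d))
    (hx_adapted : Adapted F x) (hg_adapted : Adapted F g)
    (hx_sq_int : ∀ t i, Integrable (fun ω => ‖x t ω i‖ ^ 2) μ)
    (he_meas : ∀ t, AEStronglyMeasurable (e t) μ)
    (he_int : ∀ t i, Integrable (fun ω => e t ω i) μ)
    (he_sq_int : ∀ t i, Integrable (fun ω => ‖e t ω i‖ ^ 2) μ)
    -- Assumption 1: noise
    (γ : ℝ) (hγ : 0 < γ)
    (hnoise_mean : ∀ t i, μ[fun ω => e t ω i|F t] =ᵐ[μ] 0)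
    (hnoise_var : ∀ t i, ∀ᵐ ω ∂μ, (μ[fun ω' => ‖e t ω' i‖ ^ 2|F t]) ω ≤ γ)
    -- g t ω i is a subgradient of f i at x t ω i
    (hsubgrad : ∀ t ω i, ∀ y, f i (x t ω i) + ⟪g t ω i, y - x t ω i⟫ ≤ f i y)
    -- the dynamics X(t+1) = A(t)X(t) + β(t)E(t) − α(t)G(t)
    (hdyn : ∀ t ω i, x (t + 1) ω i =
      (1 - β t) • x t ω i + β t • (∑ j, W t i j • x t ω j)
        + β t • e t ω i - α t • g t ω i) :
    ∀ xstar : EuclideanSpace ℝ (Fin d),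
      (∀ y, ∑ i, r i * f i xstar ≤ ∑ i, r i * f i y) →
      ∀ t : ℕ, ∀ᵐ ω ∂μ,
        (μ[fun ω' => ‖xbar r (x (t + 1) ω') - xstar‖ ^ 2|F t]) ω ≤
          ‖xbar r (x t ω) - xstar‖ ^ 2
            + 2 * (β t ^ 2 * γ + α t ^ 2 * L ^ 2)
            + 4 * α t * L * Real.sqrt (devSq r (x t ω))
            - 2 * α t * ((∑ i, r i * f i (xbar r (x t ω))) - ∑ i, r i * f i xstar) := by
  intro xstar hxstar t
  classical
  have hrnn : ∀ i, 0 ≤ r i := fun i => (hr_pos i).le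
  have hmle : F t ≤ m0 := F.le t
  set X : Ω → EuclideanSpace ℝ (Fin d) := fun ω => xbar r (x t ω) with hXdef
  set Gb : Ω → EuclideanSpace ℝ (Fin d) := fun ω => ∑ i, r i • g t ω i with hGbdef
  set Eb : Ω → EuclideanSpace ℝ (Fin d) := fun ω => ∑ i, r i • e t ω i with hEbdef
  set uu : Ω → EuclideanSpace ℝ (Fin d) := fun ω => X ω - xstar - α t • Gb ω with huudef
  -- subgradient norm bound
  have hgL : ∀ ω i, ‖g t ω i‖ ≤ L := fun ω i =>
    (hf_subgrad_bound i (x t ω i) (g t ω i) (hsubgrad t ω i)).le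
  have hGbL : ∀ ω, ‖Gb ω‖ ≤ L := by
    intro ω
    calc ‖Gb ω‖ ≤ ∑ i, ‖r i • g t ω i‖ := norm_sum_le _ _
      _ ≤ ∑ i, r i * L := by
          refine Finset.sum_le_sum fun i _ => ?_
          rw [norm_smul, Real.norm_eq_abs, abs_of_nonneg (hrnn i)]
          exact mul_le_mul_of_nonneg_left (hgL ω i) (hrnn i)
      _ = L := by rw [← Finset.sum_mul, hr_sum, one_mul]
  -- the dynamics identity for the average
  have hid : ∀ ω, xbar r (x (t + 1) ω) - xstar = uu ω + β t • Eb ω := by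
    intro ω
    have hmid : ∑ i, r i • (∑ j, W t i j • x t ω j) = X ω := by
      calc ∑ i, r i • (∑ j, W t i j • x t ω j)
          = ∑ i, ∑ j, (r i * W t i j) • x t ω j := by
            refine Finset.sum_congr rfl fun i _ => ?_
            rw [Finset.smul_sum]
            exact Finset.sum_congr rfl fun j _ => smul_smul _ _ _
        _ = ∑ j, ∑ i, (r i * W t i j) • x t ω j := Finset.sum_comm
        _ = ∑ j, (∑ i, r i * W t i j) • x t ω j := by
            refine Finset.sum_congr rfl fun j _ => ?_
            rw [Finset.sum_smul]
        _ = ∑ j, r j • x t ω j := by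
            refine Finset.sum_congr rfl fun j _ => ?_
            rw [hW_r t j]
        _ = X ω := rfl
    have hterm : ∀ i, r i • x (t + 1) ω i
        = (1 - β t) • (r i • x t ω i) + β t • (r i • ∑ j, W t i j • x t ω j)
          + β t • (r i • e t ω i) - α t • (r i • g t ω i) := by
      intro i
      rw [hdyn t ω i, smul_sub, smul_add, smul_add,
        smul_comm (r i) (1 - β t), smul_comm (r i) (β t), smul_comm (r i) (β t),
        smul_comm (r i) (α t)]
    have hexp : xbar r (x (t + 1) ω)
        = (1 - β t) • X ω + β t • X ω + β t • Eb ω - α t • Gb ω := by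
      show ∑ i, r i • x (t + 1) ω i = _
      calc ∑ i, r i • x (t + 1) ω i
          = ∑ i, ((1 - β t) • (r i • x t ω i) + β t • (r i • ∑ j, W t i j • x t ω j)
              + β t • (r i • e t ω i) - α t • (r i • g t ω i)) :=
            Finset.sum_congr rfl fun i _ => hterm i
        _ = (1 - β t) • (∑ i, r i • x t ω i)
              + β t • (∑ i, r i • ∑ j, W t i j • x t ω j)
              + β t • (∑ i, r i • e t ω i) - α t • (∑ i, r i • g t ω i) := by
            rw [Finset.sum_sub_distrib, Finset.sum_add_distrib, Finset.sum_add_distrib,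
              ← Finset.smul_sum, ← Finset.smul_sum, ← Finset.smul_sum, ← Finset.smul_sum]
        _ = (1 - β t) • X ω + β t • X ω + β t • Eb ω - α t • Gb ω := by
            rw [hmid]; rfl
    rw [hexp]
    have hone : (1 - β t) • X ω + β t • X ω = X ω := by
      rw [← add_smul]; norm_num
    rw [hone]
    show X ω + β t • Eb ω - α t • Gb ω - xstar = X ω - xstar - α t • Gb ω + β t • Eb ω
    abel
  -- measurability
  have hxim : ∀ i, StronglyMeasurable[F t] (fun ω => x t ω i) := fun i =>
    (continuous_apply i).comp_stronglyMeasurable (hx_adapted t).stronglyMeasurable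
  have hgim : ∀ i, StronglyMeasurable[F t] (fun ω => g t ω i) := fun i =>
    (continuous_apply i).comp_stronglyMeasurable (hg_adapted t).stronglyMeasurable
  have hXm : StronglyMeasurable[F t] X := by
    have hX2 : X = ∑ i : Fin n, (r i • fun ω => x t ω i) := by
      funext ω; simp [hXdef, xbar, Finset.sum_apply]
    rw [hX2]
    exact Finset.stronglyMeasurable_sum _ fun i _ => (hxim i).const_smul (r i)
  have hGm : StronglyMeasurable[F t] Gb := by
    have hG2 : Gb = ∑ i : Fin n, (r i • fun ω => g t ω i) := by
      funext ω; simp [hGbdef, Finset.sum_apply]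
    rw [hG2]
    exact Finset.stronglyMeasurable_sum _ fun i _ => (hgim i).const_smul (r i)
  have huum : StronglyMeasurable[F t] uu :=
    (hXm.sub stronglyMeasurable_const).sub (hGm.const_smul (α t))
  have huum0 : StronglyMeasurable uu := huum.mono hmle
  have huuk : ∀ k, StronglyMeasurable[F t] (fun ω => uu ω k) := fun k =>
    (EuclideanSpace.proj k : EuclideanSpace ℝ (Fin d) →L[ℝ] ℝ).continuous.comp_stronglyMeasurable huum
  -- integrability of Eb and its coordinates
  have hEb_int : Integrable Eb μ := by
    have h2 : Eb = ∑ i : Fin n, (r i • fun ω => e t ω i) := by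
      funext ω; simp [hEbdef, Finset.sum_apply]
    rw [h2]
    exact integrable_finset_sum' _ fun i _ => (he_int t i).smul (r i)
  have hEbm : AEStronglyMeasurable Eb μ := hEb_int.aestronglyMeasurable
  have int_Eb2 : Integrable (fun ω => ‖Eb ω‖ ^ 2) μ := by
    refine Integrable.mono' (g := fun ω => ∑ i, r i * ‖e t ω i‖ ^ 2)
      ?_ ?_ ?_
    · exact integrable_finset_sum _ (fun i _ => (he_sq_int t i).const_mul (r i))
    · have : AEStronglyMeasurable (fun ω => ‖Eb ω‖) μ := hEbm.norm
      simpa [pow_two, Pi.mul_def] using this.mul this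
    · refine ae_of_all _ fun ω => ?_
      rw [Real.norm_eq_abs, abs_of_nonneg (sq_nonneg _)]
      exact aux_weighted_norm_sq_le r hrnn hr_sum _
  -- integrability of ‖X - xstar‖² and ‖uu‖²
  have int_Xs : Integrable (fun ω => ‖X ω - xstar‖ ^ 2) μ := by
    refine Integrable.mono' (g := fun ω => ∑ i, r i * (2 * ‖x t ω i‖ ^ 2 + 2 * ‖xstar‖ ^ 2))
      ?_ ?_ ?_
    · refine integrable_finset_sum _ (fun i _ => Integrable.const_mul ?_ (r i))
      exact ((hx_sq_int t i).const_mul 2).add (integrable_const _)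
    · have hsm : AEStronglyMeasurable (fun ω => ‖X ω - xstar‖) μ :=
        (((hXm.mono hmle).sub stronglyMeasurable_const).norm).aestronglyMeasurable
      simpa [pow_two, Pi.mul_def] using hsm.mul hsm
    · refine ae_of_all _ fun ω => ?_
      rw [Real.norm_eq_abs, abs_of_nonneg (sq_nonneg _)]
      have h1 : X ω - xstar = ∑ i, r i • (x t ω i - xstar) := by
        simp only [hXdef, xbar, smul_sub, Finset.sum_sub_distrib, ← Finset.sum_smul,
          hr_sum, one_smul]
      rw [h1]
      refine (aux_weighted_norm_sq_le r hrnn hr_sum _).trans ?_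
      refine Finset.sum_le_sum fun i _ => mul_le_mul_of_nonneg_left ?_ (hrnn i)
      have hns := norm_sub_le (x t ω i) xstar
      have hsq := mul_self_le_mul_self (norm_nonneg (x t ω i - xstar)) hns
      nlinarith [sq_nonneg (‖x t ω i‖ - ‖xstar‖)]
  have int_u2 : Integrable (fun ω => ‖uu ω‖ ^ 2) μ := by
    refine Integrable.mono' (g := fun ω => 2 * ‖X ω - xstar‖ ^ 2 + 2 * (α t * L) ^ 2)
      ((int_Xs.const_mul 2).add (integrable_const _)) ?_ ?_
    · have hsm : AEStronglyMeasurable (fun ω => ‖uu ω‖) μ := huum0.norm.aestronglyMeasurable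
      simpa [pow_two, Pi.mul_def] using hsm.mul hsm
    · refine ae_of_all _ fun ω => ?_
      show ‖‖uu ω‖ ^ 2‖ ≤ 2 * ‖X ω - xstar‖ ^ 2 + 2 * (α t * L) ^ 2
      rw [Real.norm_eq_abs, abs_of_nonneg (sq_nonneg _)]
      have h1 : ‖uu ω‖ ≤ ‖X ω - xstar‖ + α t * L := by
        refine (norm_sub_le _ _).trans ?_
        gcongr
        rw [norm_smul, Real.norm_eq_abs, abs_of_nonneg (hα_nonneg t)]
        exact mul_le_mul_of_nonneg_left (hGbL ω) (hα_nonneg t)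
      have hsq := mul_self_le_mul_self (norm_nonneg (uu ω)) h1
      nlinarith [sq_nonneg (‖X ω - xstar‖ - α t * L)]
  -- coordinates of Eb
  have aux_abs_coord : ∀ (v : EuclideanSpace ℝ (Fin d)) (k : Fin d), |v k| ≤ ‖v‖ := by
    intro v k
    rw [← Real.sqrt_sq_eq_abs]
    calc Real.sqrt ((v k) ^ 2) ≤ Real.sqrt (‖v‖ ^ 2) :=
          Real.sqrt_le_sqrt (aux_coord_sq_le v k)
      _ = ‖v‖ := Real.sqrt_sq (norm_nonneg v)
  have hEbk_eq : ∀ k : Fin d, (fun ω => Eb ω k) = fun ω => ∑ i, r i * e t ω i k := by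
    intro k; funext ω
    simp only [hEbdef]
    rw [aux_sum_apply]
    refine Finset.sum_congr rfl fun i _ => ?_
    simp [smul_eq_mul]
  have aesm_eik : ∀ (i : Fin n) (k : Fin d), AEStronglyMeasurable (fun ω => e t ω i k) μ := by
    intro i k
    have h := ((EuclideanSpace.proj k :
      EuclideanSpace ℝ (Fin d) →L[ℝ] ℝ).continuous.comp (continuous_apply i)).comp_aestronglyMeasurable
      (he_meas t)
    simpa using h
  have int_eik : ∀ (i : Fin n) (k : Fin d), Integrable (fun ω => e t ω i k) μ := by
    intro i k
    refine Integrable.mono' (he_int t i).norm (aesm_eik i k) (ae_of_all _ fun ω => ?_)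
    rw [Real.norm_eq_abs]
    exact aux_abs_coord _ k
  have int_Ebk : ∀ k : Fin d, Integrable (fun ω => Eb ω k) μ := by
    intro k
    rw [hEbk_eq k]
    exact integrable_finset_sum _ (fun i _ => (int_eik i k).const_mul (r i))
  -- coordinate products
  have int_prod : ∀ k, Integrable (fun ω => uu ω k * Eb ω k) μ := by
    intro k
    refine Integrable.mono' (g := fun ω => (‖uu ω‖ ^ 2 + ‖Eb ω‖ ^ 2) / 2)
      ((int_u2.add int_Eb2).div_const 2) ?_ ?_
    · exact ((huuk k).mono hmle).aestronglyMeasurable.mul (int_Ebk k).aestronglyMeasurable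
    · refine ae_of_all _ fun ω => ?_
      rw [Real.norm_eq_abs, abs_mul]
      have h1 := aux_coord_sq_le (uu ω) k
      have h2 := aux_coord_sq_le (Eb ω) k
      nlinarith [sq_nonneg (|uu ω k| - |Eb ω k|), sq_abs (uu ω k), sq_abs (Eb ω k),
        abs_nonneg (uu ω k), abs_nonneg (Eb ω k)]
  -- the inner product term
  set fip : Ω → ℝ := fun ω => ⟪uu ω, Eb ω⟫ with hfipdef
  have hfip_sum : fip = ∑ k : Fin d, (fun ω => uu ω k * Eb ω k) := by
    funext ω
    simp [hfipdef, PiLp.inner_apply, RCLike.inner_apply, Finset.sum_apply, mul_comm]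
  have int_fip : Integrable fip μ := by
    rw [hfip_sum]
    exact integrable_finset_sum' _ (fun k _ => int_prod k)
  -- conditional expectation of Eb is zero
  have hEbcond : μ[Eb|F t] =ᵐ[μ] 0 := by
    have h1 : Eb = ∑ i : Fin n, (r i • fun ω => e t ω i) := by
      funext ω; simp [hEbdef, Finset.sum_apply]
    rw [h1]
    have h2 := condExp_finsetSum (m := F t) (μ := μ)
      (f := fun (i : Fin n) => (r i • fun ω => e t ω i)) (s := Finset.univ)
      (fun i _ => ((he_int t i).smul (r i)))
    refine h2.trans ?_
    have h3 : ∀ i : Fin n, μ[r i • fun ω => e t ω i|F t] =ᵐ[μ] 0 := by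
      intro i
      refine (condExp_smul (r i) _ _).trans ?_
      filter_upwards [hnoise_mean t i] with ω hω
      simp [Pi.smul_apply, hω]
    -- sum of a.e. zero is a.e. zero
    have h4 : ∀ᵐ ω ∂μ, ∀ i : Fin n, (μ[r i • fun ω => e t ω i|F t]) ω = 0 := by
      rw [MeasureTheory.ae_all_iff]
      intro i
      filter_upwards [h3 i] with ω hω using hω
    filter_upwards [h4] with ω hω
    simp only [Finset.sum_apply, Pi.zero_apply]
    exact Finset.sum_eq_zero fun i _ => hω i
  have hEbkcond : ∀ k, μ[fun ω => Eb ω k|F t] =ᵐ[μ] 0 := by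
    intro k
    have := aux_condexp_comp_zero hmle μ
      (EuclideanSpace.proj k : EuclideanSpace ℝ (Fin d) →L[ℝ] ℝ) hEb_int hEbcond
    simpa using this
  -- conditional expectation of the inner product term is zero
  have E2 : μ[fip|F t] =ᵐ[μ] 0 := by
    rw [hfip_sum]
    refine (condExp_finsetSum (fun k _ => int_prod k) _).trans ?_
    have h3 : ∀ k : Fin d, μ[(fun ω => uu ω k * Eb ω k)|F t] =ᵐ[μ] 0 := by
      intro k
      have hmul := condExp_mul_of_stronglyMeasurable_left (μ := μ) (huuk k)
        (by simpa [Pi.mul_def] using int_prod k)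
        (int_Ebk k)
      refine EventuallyEq.trans ?_ (hmul.trans ?_)
      · rfl
      · filter_upwards [hEbkcond k] with ω hω
        simp [Pi.mul_apply, hω]
    have h4 : ∀ᵐ ω ∂μ, ∀ k : Fin d, (μ[(fun ω => uu ω k * Eb ω k)|F t]) ω = 0 := by
      rw [MeasureTheory.ae_all_iff]
      intro k
      filter_upwards [h3 k] with ω hω using hω
    filter_upwards [h4] with ω hω
    simp only [Finset.sum_apply, Pi.zero_apply]
    exact Finset.sum_eq_zero fun k _ => hω k
  -- conditional variance bound
  set f3 : Ω → ℝ := fun ω => ‖Eb ω‖ ^ 2 with hf3def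
  have int_f3 : Integrable f3 μ := int_Eb2
  have E3 : ∀ᵐ ω ∂μ, (μ[f3|F t]) ω ≤ γ := by
    have h0 : (fun ω' => ∑ i, r i * ‖e t ω' i‖ ^ 2)
        = ∑ i : Fin n, (r i • fun ω' => ‖e t ω' i‖ ^ 2) := by
      funext ω'; simp [Finset.sum_apply, smul_eq_mul]
    have intSum : Integrable (fun ω' => ∑ i, r i * ‖e t ω' i‖ ^ 2) μ :=
      integrable_finset_sum _ (fun i _ => (he_sq_int t i).const_mul (r i))
    have hle : μ[f3|F t] ≤ᵐ[μ] μ[fun ω' => ∑ i, r i * ‖e t ω' i‖ ^ 2|F t] :=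
      condExp_mono int_f3 intSum
        (ae_of_all _ fun ω => aux_weighted_norm_sq_le r hrnn hr_sum _)
    rw [h0] at hle
    have hA := condExp_finsetSum (μ := μ) (m := F t)
      (f := fun (i : Fin n) => (r i • fun ω' => ‖e t ω' i‖ ^ 2)) (s := Finset.univ)
      (fun i _ => ((he_sq_int t i).smul (r i)))
    have hB : ∀ᵐ ω ∂μ, ∀ i : Fin n,
        (μ[r i • fun ω' => ‖e t ω' i‖ ^ 2|F t]) ω = r i * (μ[fun ω' => ‖e t ω' i‖ ^ 2|F t]) ω := by
      rw [MeasureTheory.ae_all_iff]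
      intro i
      filter_upwards [condExp_smul (μ := μ) (m := F t) (r i) (fun ω' => ‖e t ω' i‖ ^ 2)]
        with ω hω
      simpa [smul_eq_mul] using hω
    have hC : ∀ᵐ ω ∂μ, ∀ i : Fin n, (μ[fun ω' => ‖e t ω' i‖ ^ 2|F t]) ω ≤ γ := by
      rw [MeasureTheory.ae_all_iff]
      exact fun i => hnoise_var t i
    filter_upwards [hle, hA, hB, hC] with ω h1 h2 h3 h4
    calc (μ[f3|F t]) ω ≤ (μ[∑ i : Fin n, (r i • fun ω' => ‖e t ω' i‖ ^ 2)|F t]) ω := h1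
      _ = ∑ i, (μ[r i • fun ω' => ‖e t ω' i‖ ^ 2|F t]) ω := by rw [h2]; simp [Finset.sum_apply]
      _ = ∑ i, r i * (μ[fun ω' => ‖e t ω' i‖ ^ 2|F t]) ω :=
          Finset.sum_congr rfl fun i _ => h3 i
      _ ≤ ∑ i, r i * γ :=
          Finset.sum_le_sum fun i _ => mul_le_mul_of_nonneg_left (h4 i) (hrnn i)
      _ = γ := by rw [← Finset.sum_mul, hr_sum, one_mul]
  -- assembling the conditional expectation
  set f1 : Ω → ℝ := fun ω => ‖uu ω‖ ^ 2 with hf1def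
  have int_f1 : Integrable f1 μ := int_u2
  have hf1m : StronglyMeasurable[F t] f1 := by
    have h : f1 = fun ω => ‖uu ω‖ * ‖uu ω‖ := by funext ω; simp [hf1def, pow_two]
    rw [h]; exact huum.norm.mul huum.norm
  have hdecomp : (fun ω' => ‖xbar r (x (t + 1) ω') - xstar‖ ^ 2)
      = f1 + (2 * β t) • fip + (β t) ^ 2 • f3 := by
    funext ω
    simp only [Pi.add_apply, Pi.smul_apply, smul_eq_mul, hf1def, hf3def, hfipdef]
    rw [hid ω, norm_add_sq_real, real_inner_smul_right, norm_smul]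
    simp only [Real.norm_eq_abs, mul_pow, sq_abs]
    ring
  have int_f2' : Integrable ((2 * β t) • fip) μ := int_fip.smul (2 * β t)
  have int_f3' : Integrable ((β t) ^ 2 • f3) μ := int_f3.smul ((β t) ^ 2)
  have E1 : ∀ᵐ ω ∂μ, (μ[fun ω' => ‖xbar r (x (t + 1) ω') - xstar‖ ^ 2|F t]) ω ≤
      ‖uu ω‖ ^ 2 + β t ^ 2 * γ := by
    rw [hdecomp]
    have A1 := condExp_add (μ := μ) (m := F t) (int_f1.add int_f2') int_f3'
    have A2 := condExp_add (μ := μ) (m := F t) int_f1 int_f2'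
    have A3 := condExp_smul (μ := μ) (m := F t) (2 * β t) fip
    have A4 := condExp_smul (μ := μ) (m := F t) ((β t) ^ 2) f3
    have A5 : μ[f1|F t] = f1 := condExp_of_stronglyMeasurable hmle hf1m int_f1
    filter_upwards [A1, A2, A3, A4, E2, E3] with ω h1 h2 h3 h4 h5 h6
    have step1 : (μ[f1 + (2 * β t) • fip + (β t) ^ 2 • f3|F t]) ω
        = (μ[f1 + (2 * β t) • fip|F t]) ω + (μ[(β t) ^ 2 • f3|F t]) ω := by
      rw [h1]; simp
    have step2 : (μ[f1 + (2 * β t) • fip|F t]) ω = (μ[f1|F t]) ω + (μ[(2 * β t) • fip|F t]) ω := by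
      rw [h2]; simp
    have step3 : (μ[(2 * β t) • fip|F t]) ω = (2 * β t) * (μ[fip|F t]) ω := by
      rw [h3]; simp
    have step4 : (μ[(β t) ^ 2 • f3|F t]) ω = (β t) ^ 2 * (μ[f3|F t]) ω := by
      rw [h4]; simp
    have step5 : (μ[f1|F t]) ω = f1 ω := congrFun A5 ω
    have h5' : (μ[fip|F t]) ω = 0 := h5
    have h6' : (β t) ^ 2 * (μ[f3|F t]) ω ≤ (β t) ^ 2 * γ :=
      mul_le_mul_of_nonneg_left h6 (sq_nonneg _)
    have hf1ω : f1 ω = ‖uu ω‖ ^ 2 := rfl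
    rw [step1, step2, step3, step4, step5, h5', hf1ω]
    linarith [h6']
  -- deterministic bound on ‖uu‖²
  have hdet : ∀ ω, ‖uu ω‖ ^ 2 ≤ ‖X ω - xstar‖ ^ 2 + α t ^ 2 * L ^ 2
      + 4 * α t * L * Real.sqrt (devSq r (x t ω))
      - 2 * α t * ((∑ i, r i * f i (X ω)) - ∑ i, r i * f i xstar) := by
    intro ω
    have hexp : ‖uu ω‖ ^ 2 = ‖X ω - xstar‖ ^ 2
        - 2 * (α t * ⟪X ω - xstar, Gb ω⟫) + (α t) ^ 2 * ‖Gb ω‖ ^ 2 := by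
      show ‖(X ω - xstar) - α t • Gb ω‖ ^ 2 = _
      rw [norm_sub_sq_real, real_inner_smul_right, norm_smul]
      simp only [Real.norm_eq_abs, mul_pow, sq_abs]
    have hGb2 : (α t) ^ 2 * ‖Gb ω‖ ^ 2 ≤ α t ^ 2 * L ^ 2 := by
      have h := hGbL ω
      nlinarith [mul_self_le_mul_self (norm_nonneg (Gb ω)) h, sq_nonneg (α t)]
    have hper : ∀ i, f i (X ω) - f i xstar
        ≤ ⟪g t ω i, X ω - xstar⟫ + 2 * L * ‖x t ω i - X ω‖ := by
      intro i
      have hA : f i (X ω) - f i (x t ω i) ≤ L * ‖X ω - x t ω i‖ :=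
        aux_lip (f i) (hf_convex i) L (hf_subgrad_bound i) (x t ω i) (X ω)
      rw [norm_sub_rev] at hA
      have hB := hsubgrad t ω i xstar
      have hC : ⟪g t ω i, x t ω i - xstar⟫
          = ⟪g t ω i, X ω - xstar⟫ + ⟪g t ω i, x t ω i - X ω⟫ := by
        rw [← inner_add_right]
        congr 1
        abel
      have hD : ⟪g t ω i, x t ω i - X ω⟫ ≤ L * ‖x t ω i - X ω‖ := by
        refine (real_inner_le_norm _ _).trans ?_
        exact mul_le_mul_of_nonneg_right (hgL ω i) (norm_nonneg _)
      have hE : ⟪g t ω i, xstar - x t ω i⟫ = -⟪g t ω i, x t ω i - xstar⟫ := by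
        rw [← inner_neg_right]
        congr 1
        abel
      linarith [hA, hB, hD, hC, hE]
    have hsum1 : ∑ i, r i * (f i (X ω) - f i xstar)
        ≤ ∑ i, r i * (⟪g t ω i, X ω - xstar⟫ + 2 * L * ‖x t ω i - X ω‖) :=
      Finset.sum_le_sum fun i _ => mul_le_mul_of_nonneg_left (hper i) (hrnn i)
    have hsum2 : ∑ i, r i * ⟪g t ω i, X ω - xstar⟫ = ⟪Gb ω, X ω - xstar⟫ := by
      rw [show Gb ω = ∑ i, r i • g t ω i from rfl, sum_inner]
      exact Finset.sum_congr rfl fun i _ => (real_inner_smul_left _ _ _).symm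
    have hsum3 : ∑ i, r i * ‖x t ω i - X ω‖ ≤ Real.sqrt (devSq r (x t ω)) := by
      refine Real.le_sqrt_of_sq_le ?_
      exact aux_weighted_sq r hrnn hr_sum _
    have expand : ∑ i, r i * (⟪g t ω i, X ω - xstar⟫ + 2 * L * ‖x t ω i - X ω‖)
        = (∑ i, r i * ⟪g t ω i, X ω - xstar⟫) + 2 * L * ∑ i, r i * ‖x t ω i - X ω‖ := by
      calc ∑ i, r i * (⟪g t ω i, X ω - xstar⟫ + 2 * L * ‖x t ω i - X ω‖)
          = ∑ i, (r i * ⟪g t ω i, X ω - xstar⟫ + 2 * L * (r i * ‖x t ω i - X ω‖)) :=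
            Finset.sum_congr rfl fun i _ => by ring
        _ = _ := by rw [Finset.sum_add_distrib, Finset.mul_sum]
    have hsub : ∑ i, r i * (f i (X ω) - f i xstar)
        = (∑ i, r i * f i (X ω)) - ∑ i, r i * f i xstar := by
      rw [← Finset.sum_sub_distrib]
      exact Finset.sum_congr rfl fun i _ => by ring
    have hkey : (∑ i, r i * f i (X ω)) - (∑ i, r i * f i xstar)
        ≤ ⟪X ω - xstar, Gb ω⟫ + 2 * L * Real.sqrt (devSq r (x t ω)) := by
      have h2L : (0:ℝ) ≤ 2 * L := by linarith
      have h3 := mul_le_mul_of_nonneg_left hsum3 h2L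
      rw [← hsub]
      calc ∑ i, r i * (f i (X ω) - f i xstar)
          ≤ (∑ i, r i * ⟪g t ω i, X ω - xstar⟫) + 2 * L * ∑ i, r i * ‖x t ω i - X ω‖ := by
            rw [← expand]; exact hsum1
        _ ≤ ⟪Gb ω, X ω - xstar⟫ + 2 * L * Real.sqrt (devSq r (x t ω)) := by
            rw [hsum2]; linarith
        _ = ⟪X ω - xstar, Gb ω⟫ + 2 * L * Real.sqrt (devSq r (x t ω)) := by
            rw [real_inner_comm]
    have hmul := mul_le_mul_of_nonneg_left hkey
      (by linarith [hα_nonneg t] : (0:ℝ) ≤ 2 * α t)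
    nlinarith [hexp, hGb2, hmul]
  filter_upwards [E1] with ω hω
  have h1 := hdet ω
  have h2 : 0 ≤ β t ^ 2 * γ := mul_nonneg (sq_nonneg _) hγ.le
  have h3 : 0 ≤ α t ^ 2 * L ^ 2 := mul_nonneg (sq_nonneg _) (sq_nonneg _)
  have hXshow : X ω = xbar r (x t ω) := rfl
  rw [hXshow] at h1
  linarith [h1, hω]
end

section
/- Consider the recursion x̄(k+1) = x̄(k) + β(k)·rᵀE(k) in ℝ^d, where r is a nonnegative stochastic vector, {F_k} is a filtration to which x̄ is adapted, and the noise satisfies E[rᵀE(k) | F_k] = 0 and E[‖rᵀE(k)‖² | F_k] = γ almost surely for a constant γ > 0. Then E[‖x̄(t)‖²] = ‖x̄(1)‖² + γ·Σ_{k=1}^{t−1} β²(k) for every t ≥ 1. Consequently, if x̄(t) converges in L² to some random vector x̃ with E‖x̃‖² < ∞, then Σ_{k=1}^∞ β²(k) < ∞. -/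
open MeasureTheory Filter

lemma abs_coord_le_norm' {d : ℕ} (x : EuclideanSpace ℝ (Fin d)) (j : Fin d) : |x j| ≤ ‖x‖ := by
  rw [EuclideanSpace.norm_eq, ← Real.sqrt_sq_eq_abs]
  apply Real.sqrt_le_sqrt
  have := Finset.single_le_sum (f := fun i => ‖x i‖ ^ 2) (fun i _ => sq_nonneg _) (Finset.mem_univ j)
  simpa [Real.norm_eq_abs, sq_abs] using this

lemma cross_zero' {Ω : Type*} {m0 : MeasurableSpace Ω} (μ : Measure Ω) [IsProbabilityMeasure μ]
    {d : ℕ} {m : MeasurableSpace Ω} (hm : m ≤ m0)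
    (X wf : Ω → EuclideanSpace ℝ (Fin d))
    (hX : StronglyMeasurable[m] X) (hX2 : Integrable (fun ω => ‖X ω‖ ^ 2) μ)
    (hw_int : Integrable wf μ) (hw2 : Integrable (fun ω => ‖wf ω‖ ^ 2) μ)
    (hmean : μ[wf|m] =ᵐ[μ] 0) :
    Integrable (fun ω => (inner ℝ (X ω) (wf ω) : ℝ)) μ ∧
      ∫ ω, (inner ℝ (X ω) (wf ω) : ℝ) ∂μ = 0 := by
  haveI : SigmaFinite (μ.trim hm) := inferInstance
  have hXm0 : StronglyMeasurable[m0] X := hX.mono hm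
  -- coordinate measurability
  have hfj : ∀ j : Fin d, StronglyMeasurable[m] (fun ω => X ω j) := fun j =>
    (EuclideanSpace.proj (𝕜 := ℝ) j).continuous.comp_stronglyMeasurable hX
  have hgjm : ∀ j : Fin d, @AEStronglyMeasurable Ω ℝ _ m0 m0 (fun ω => wf ω j) μ :=
    fun j => (EuclideanSpace.proj (𝕜 := ℝ) j).continuous.comp_aestronglyMeasurable hw_int.aestronglyMeasurable
  -- majorant
  have hmaj : Integrable (fun ω => (‖X ω‖ ^ 2 + ‖wf ω‖ ^ 2) / 2) μ := (hX2.add hw2).div_const 2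
  have hbd : ∀ (ω : Ω) (j : Fin d), ‖X ω j * wf ω j‖ ≤ (‖X ω‖ ^ 2 + ‖wf ω‖ ^ 2) / 2 := by
    intro ω j
    have h1 := abs_coord_le_norm' (X ω) j
    have h2 := abs_coord_le_norm' (wf ω) j
    have h3 : |X ω j * wf ω j| = |X ω j| * |wf ω j| := abs_mul _ _
    rw [Real.norm_eq_abs, h3]
    nlinarith [abs_nonneg (X ω j), abs_nonneg (wf ω j), norm_nonneg (X ω), norm_nonneg (wf ω),
      sq_nonneg (‖X ω‖ - ‖wf ω‖)]
  have hprod_int : ∀ j : Fin d, Integrable (fun ω => X ω j * wf ω j) μ := by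
    intro j
    refine Integrable.mono' hmaj ?_ (ae_of_all _ fun ω => hbd ω j)
    exact ((hfj j).mono hm).aestronglyMeasurable.mul (hgjm j)
  have hgj_int : ∀ j : Fin d, Integrable (fun ω => wf ω j) μ := by
    intro j
    refine Integrable.mono' hw_int.norm (hgjm j) (ae_of_all _ fun ω => ?_)
    simpa [Real.norm_eq_abs] using abs_coord_le_norm' (wf ω) j
  -- conditional expectation of coordinate is zero
  have hcond_j : ∀ j : Fin d, μ[(fun ω => wf ω j)|m] =ᵐ[μ] 0 := by
    intro j
    letI : MeasurableSpace Ω := m0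
    refine (ae_eq_condExp_of_forall_setIntegral_eq hm (hgj_int j)
      (fun s _ _ => ?_) (fun s hs hμs => ?_) ?_).symm
    · exact (integrable_zero _ _ _).integrableOn
    have h0 : ∫ x in s, wf x ∂μ = 0 := by
      rw [← setIntegral_condExp hm hw_int hs]
      calc ∫ x in s, (μ[wf|m]) x ∂μ = ∫ x in s, (0 : EuclideanSpace ℝ (Fin d)) ∂μ :=
            integral_congr_ae (ae_restrict_of_ae hmean)
        _ = 0 := integral_zero _ _
    have hc : ∫ x in s, (EuclideanSpace.proj j : EuclideanSpace ℝ (Fin d) →L[ℝ] ℝ) (wf x) ∂μ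
        = (EuclideanSpace.proj j : EuclideanSpace ℝ (Fin d) →L[ℝ] ℝ) (∫ x in s, wf x ∂μ) :=
      ContinuousLinearMap.integral_comp_comm _ hw_int.integrableOn
    simp only [PiLp.proj_apply, h0] at hc
    simp only [Pi.zero_apply, integral_zero] at hc ⊢
    simp [hc]
    · exact stronglyMeasurable_const.aestronglyMeasurable
  have hmul_cond : ∀ j : Fin d, μ[(fun ω => X ω j * wf ω j)|m] =ᵐ[μ] 0 := by
    intro j
    have := condExp_mul_of_stronglyMeasurable_left (hfj j) (hprod_int j) (hgj_int j)
    refine this.trans ?_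
    filter_upwards [hcond_j j] with ω h
    simp [h]
  have hint_j : ∀ j : Fin d, ∫ ω, X ω j * wf ω j ∂μ = 0 := by
    intro j
    rw [← integral_condExp hm]
    exact integral_eq_zero_of_ae (hmul_cond j)
  have hinner : (fun ω => (inner ℝ (X ω) (wf ω) : ℝ)) = fun ω => ∑ j, X ω j * wf ω j := by
    funext ω
    simp [PiLp.inner_apply, RCLike.inner_apply, mul_comm]
  rw [hinner]
  refine ⟨integrable_finset_sum _ fun j _ => hprod_int j, ?_⟩
  rw [integral_finset_sum _ fun j _ => hprod_int j]
  exact Finset.sum_eq_zero fun j _ => hint_j j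

theorem stmt_14 {Ω : Type*} {m0 : MeasurableSpace Ω} (μ : Measure Ω) [IsProbabilityMeasure μ]
    {n d : ℕ} (F : Filtration ℕ m0)
    (r : Fin n → ℝ) (hr_nonneg : ∀ i, 0 ≤ r i) (hr_sum : ∑ i, r i = 1)
    (xbar : ℕ → Ω → EuclideanSpace ℝ (Fin d))
    (e : ℕ → Ω → Fin n → EuclideanSpace ℝ (Fin d))
    (β : ℕ → ℝ) (hβ_nonneg : ∀ k, 0 ≤ β k)
    (γ : ℝ) (hγ : 0 < γ)
    (hx_adapted : Adapted F xbar)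
    (hw_meas : ∀ k, AEStronglyMeasurable (fun ω => ∑ i, r i • e k ω i) μ)
    (hw_int : ∀ k, Integrable (fun ω => ∑ i, r i • e k ω i) μ)
    (hw_sq_int : ∀ k, Integrable (fun ω => ‖∑ i, r i • e k ω i‖ ^ 2) μ)
    (hrec : ∀ k ω, 1 ≤ k → xbar (k + 1) ω = xbar k ω + β k • ∑ i, r i • e k ω i)
    (hmean : ∀ k, μ[fun ω => ∑ i, r i • e k ω i|F k] =ᵐ[μ] 0)
    (hvar : ∀ k, μ[fun ω => ‖∑ i, r i • e k ω i‖ ^ 2|F k] =ᵐ[μ] fun _ => γ)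
    (x1 : EuclideanSpace ℝ (Fin d)) (hx1 : ∀ ω, xbar 1 ω = x1) :
    (∀ t : ℕ, 1 ≤ t →
      ∫ ω, ‖xbar t ω‖ ^ 2 ∂μ = ‖x1‖ ^ 2 + γ * ∑ k ∈ Finset.Icc 1 (t - 1), β k ^ 2) ∧
    ((∃ xt : Ω → EuclideanSpace ℝ (Fin d), AEStronglyMeasurable xt μ ∧
        Integrable (fun ω => ‖xt ω‖ ^ 2) μ ∧
        Tendsto (fun t => ∫ ω, ‖xbar t ω - xt ω‖ ^ 2 ∂μ) atTop (nhds 0)) →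
      Summable (fun k => β k ^ 2)) := by
  classical
  have key : ∀ t, 1 ≤ t → Integrable (fun ω => ‖xbar t ω‖ ^ 2) μ ∧
      ∫ ω, ‖xbar t ω‖ ^ 2 ∂μ = ‖x1‖ ^ 2 + γ * ∑ k ∈ Finset.Icc 1 (t - 1), β k ^ 2 := by
    intro t
    induction t with
    | zero => omega
    | succ t ih =>
      intro _
      by_cases ht : 1 ≤ t
      · obtain ⟨hInt, hEq⟩ := ih ht
        haveI : SigmaFinite (μ.trim (F.le t)) := inferInstance
        have hcross := cross_zero' μ (F.le t) (xbar t) (fun ω => ∑ i, r i • e t ω i)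
          (hx_adapted t).stronglyMeasurable hInt (hw_int t) (hw_sq_int t) (hmean t)
        have hvar_int : ∫ ω, ‖∑ i, r i • e t ω i‖ ^ 2 ∂μ = γ := by
          rw [← integral_condExp (F.le t), integral_congr_ae (hvar t), integral_const]
          simp
        have hpt : ∀ ω, ‖xbar (t + 1) ω‖ ^ 2 = ‖xbar t ω‖ ^ 2 +
            (2 * β t * (inner ℝ (xbar t ω) (∑ i, r i • e t ω i) : ℝ) +
              β t ^ 2 * ‖∑ i, r i • e t ω i‖ ^ 2) := by
          intro ω
          rw [hrec t ω ht, norm_add_sq_real, real_inner_smul_right, norm_smul, mul_pow]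
          simp only [Real.norm_eq_abs, sq_abs]
          ring
        have hre : (fun ω => ‖xbar (t + 1) ω‖ ^ 2) = fun ω => ‖xbar t ω‖ ^ 2 +
            (2 * β t * (inner ℝ (xbar t ω) (∑ i, r i • e t ω i) : ℝ) +
              β t ^ 2 * ‖∑ i, r i • e t ω i‖ ^ 2) := funext hpt
        have hint2 : Integrable (fun ω =>
            2 * β t * (inner ℝ (xbar t ω) (∑ i, r i • e t ω i) : ℝ) +
              β t ^ 2 * ‖∑ i, r i • e t ω i‖ ^ 2) μ :=
          (hcross.1.const_mul _).add ((hw_sq_int t).const_mul _)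
        refine ⟨by rw [hre]; exact hInt.add hint2, ?_⟩
        rw [hre, integral_add hInt hint2,
          integral_add (hcross.1.const_mul _) ((hw_sq_int t).const_mul _),
          integral_const_mul, integral_const_mul, hcross.2, hvar_int, hEq, mul_zero]
        obtain ⟨s, rfl⟩ : ∃ s, t = s + 1 := ⟨t - 1, by omega⟩
        simp only [Nat.add_sub_cancel]
        rw [Finset.sum_Icc_succ_top (by omega : 1 ≤ s + 1)]
        ring
      · have ht0 : t = 0 := by omega
        subst ht0
        refine ⟨by simp only [hx1]; exact integrable_const _, ?_⟩
        simp [hx1, Finset.Icc_eq_empty_of_lt]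
  refine ⟨fun t ht => (key t ht).2, ?_⟩
  rintro ⟨xt, hxt_meas, hxt_int, hconv⟩
  have h1 : ∀ᶠ t in atTop, ∫ ω, ‖xbar t ω - xt ω‖ ^ 2 ∂μ < 1 :=
    hconv.eventually_lt_const one_pos
  obtain ⟨T, hT⟩ := eventually_atTop.1 h1
  set C : ℝ := (2 + 2 * ∫ ω, ‖xt ω‖ ^ 2 ∂μ - ‖x1‖ ^ 2) / γ with hC
  have hS : ∀ m, ∑ k ∈ Finset.Icc 1 m, β k ^ 2 ≤ max C 0 := by
    intro m
    set t := max (m + 1) (max T 1) with htdef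
    have ht1 : 1 ≤ t := le_trans (le_max_right _ _) (le_max_right _ _)
    have htT : T ≤ t := le_trans (le_max_left _ _) (le_max_right _ _)
    obtain ⟨hIntt, hEqt⟩ := key t ht1
    have hXm : AEStronglyMeasurable (xbar t) μ :=
      ((hx_adapted t).mono (F.le t) le_rfl).aestronglyMeasurable
    have hdm : AEStronglyMeasurable (fun ω => ‖xbar t ω - xt ω‖ ^ 2) μ :=
      (hXm.sub hxt_meas).norm.pow 2
    have hdi : Integrable (fun ω => ‖xbar t ω - xt ω‖ ^ 2) μ := by
      refine Integrable.mono' ((hIntt.const_mul 2).add (hxt_int.const_mul 2)) hdm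
        (ae_of_all _ fun ω => ?_)
      have h := norm_sub_le (xbar t ω) (xt ω)
      have h2 : ‖xbar t ω - xt ω‖ ^ 2 ≤ (‖xbar t ω‖ + ‖xt ω‖) ^ 2 :=
        pow_le_pow_left₀ (norm_nonneg _) h 2
      have h3 := sq_nonneg (‖xbar t ω‖ - ‖xt ω‖)
      rw [Real.norm_eq_abs, abs_of_nonneg (by positivity)]
      simp only [Pi.add_apply]
      nlinarith [h2, h3]
    have hle2 : ∫ ω, ‖xbar t ω‖ ^ 2 ∂μ ≤
        ∫ ω, (2 * ‖xbar t ω - xt ω‖ ^ 2 + 2 * ‖xt ω‖ ^ 2) ∂μ := by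
      refine integral_mono hIntt ((hdi.const_mul 2).add (hxt_int.const_mul 2)) fun ω => ?_
      have h : ‖xbar t ω‖ ≤ ‖xbar t ω - xt ω‖ + ‖xt ω‖ := by
        have := norm_add_le (xbar t ω - xt ω) (xt ω)
        simpa using this
      have h2 : ‖xbar t ω‖ ^ 2 ≤ (‖xbar t ω - xt ω‖ + ‖xt ω‖) ^ 2 :=
        pow_le_pow_left₀ (norm_nonneg _) h 2
      have h3 := sq_nonneg (‖xbar t ω - xt ω‖ - ‖xt ω‖)
      simp only [Pi.add_apply]
      nlinarith [h2, h3]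
    rw [integral_add (hdi.const_mul 2) (hxt_int.const_mul 2), integral_const_mul,
      integral_const_mul] at hle2
    have hlt := hT t htT
    have hmono : ∑ k ∈ Finset.Icc 1 m, β k ^ 2 ≤ ∑ k ∈ Finset.Icc 1 (t - 1), β k ^ 2 :=
      Finset.sum_le_sum_of_subset_of_nonneg
        (Finset.Icc_subset_Icc_right (by omega)) (fun k _ _ => sq_nonneg _)
    have hkey : γ * ∑ k ∈ Finset.Icc 1 (t - 1), β k ^ 2 ≤
        2 + 2 * ∫ ω, ‖xt ω‖ ^ 2 ∂μ - ‖x1‖ ^ 2 := by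
      rw [hEqt] at hle2
      linarith
    have hC' : ∑ k ∈ Finset.Icc 1 (t - 1), β k ^ 2 ≤ C := by
      rw [hC, le_div_iff₀ hγ]
      linarith
    exact le_trans (le_trans hmono hC') (le_max_left _ _)
  refine summable_of_sum_range_le (fun k => sq_nonneg _) (c := β 0 ^ 2 + max C 0) fun nn => ?_
  match nn with
  | 0 => simp; positivity
  | Nat.succ m =>
    have hr : ∑ k ∈ Finset.range (m + 1), β k ^ 2 =
        β 0 ^ 2 + ∑ k ∈ Finset.Icc 1 m, β k ^ 2 := by
      rw [Finset.range_eq_Ico, Finset.sum_eq_sum_Ico_succ_bot (by omega), Finset.Ico_add_one_right_eq_Icc]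
    rw [hr]
    exact add_le_add_right (hS m) _
end

section
/- (Robbins–Siegmund) Suppose {v(t)}, {ζ(t)}, {u(t)}, {z(t)} are nonnegative random processes adapted to a filtration {F_t} satisfying, almost surely for all t, E[v(t+1) | F_t] ≤ (1 + ζ(t))·v(t) − u(t) + z(t). If Σ_{t=1}^∞ z(t) < ∞ and Σ_{t=1}^∞ ζ(t) < ∞ almost surely, then almost surely Σ_{t=1}^∞ u(t) < ∞ and v(t) converges to a nonnegative random variable. -/
open MeasureTheory Filter Finset

theorem robbins_aux {Ω : Type*} {m0 : MeasurableSpace Ω} (μ : Measure Ω) [IsProbabilityMeasure μ]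
    (F : Filtration ℕ m0) (v ζ u z : ℕ → Ω → ℝ) (n : ℝ)
    (hv_adapted : Adapted F v) (hζ_adapted : Adapted F ζ)
    (hu_adapted : Adapted F u) (hz_adapted : Adapted F z)
    (hv_nonneg : ∀ t ω, 0 ≤ v t ω) (hζ_nonneg : ∀ t ω, 0 ≤ ζ t ω)
    (hu_nonneg : ∀ t ω, 0 ≤ u t ω) (hz_nonneg : ∀ t ω, 0 ≤ z t ω)
    (hv_int : ∀ t, Integrable (v t) μ)
    (hineq : ∀ t, ∀ᵐ ω ∂μ,
      (μ[v (t + 1)|F t]) ω ≤ (1 + ζ t ω) * v t ω - u t ω + z t ω)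
    (hzb : ∀ t ω, ∑ s ∈ Finset.range t, z s ω ≤ n)
    (hζb : ∀ t ω, ∑ s ∈ Finset.range t, ζ s ω ≤ n) :
    ∀ᵐ ω ∂μ, Summable (fun t => u t ω) ∧
      ∃ c : ℝ, 0 ≤ c ∧ Tendsto (fun t => v t ω) atTop (nhds c) := by
  obtain ⟨ω0⟩ : Nonempty Ω := μ.nonempty_of_neZero
  have hn : 0 ≤ n := le_trans (hz_nonneg 0 ω0) (by simpa using hzb 1 ω0)
  set P : ℕ → Ω → ℝ := fun t ω => ∏ s ∈ Finset.range t, (1 + ζ s ω) with hPdef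
  have hPsucc : ∀ t ω, P (t + 1) ω = P t ω * (1 + ζ t ω) := by
    intro t ω; simp only [hPdef]; exact Finset.prod_range_succ _ _
  have hP1 : ∀ t ω, 1 ≤ P t ω := by
    intro t ω
    induction t with
    | zero => simp [hPdef]
    | succ k ih => rw [hPsucc]; nlinarith [hζ_nonneg k ω]
  have hPpos : ∀ t ω, 0 < P t ω := fun t ω => lt_of_lt_of_le one_pos (hP1 t ω)
  have hPmono : ∀ ω, Monotone fun t => P t ω := fun ω =>
    monotone_nat_of_le_succ fun t => by
      rw [hPsucc]; nlinarith [hPpos t ω, hζ_nonneg t ω]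
  have hPle : ∀ t ω, P t ω ≤ Real.exp n := by
    intro t ω
    calc P t ω ≤ ∏ s ∈ Finset.range t, Real.exp (ζ s ω) := by
          simp only [hPdef]
          exact Finset.prod_le_prod (fun s _ => by linarith [hζ_nonneg s ω])
            (fun s _ => by linarith [Real.add_one_le_exp (ζ s ω)])
      _ = Real.exp (∑ s ∈ Finset.range t, ζ s ω) := (Real.exp_sum _ _).symm
      _ ≤ Real.exp n := Real.exp_le_exp.mpr (hζb t ω)
  have hζmeas : ∀ t s, s ≤ t → Measurable[F t] (ζ s) := fun t s hst =>
    ((hζ_adapted s).mono (F.mono hst) le_rfl)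
  have hPmeas : ∀ t k, k ≤ t + 1 → Measurable[F t] (P k) := by
    intro t k hk
    simp only [hPdef]
    apply Finset.measurable_prod
    intro s hs
    have hst : s ≤ t := by have := Finset.mem_range.mp hs; omega
    exact measurable_const.add (hζmeas t s hst)
  have hz_le : ∀ t ω, z t ω ≤ n := by
    intro t ω
    calc z t ω ≤ ∑ s ∈ Finset.range (t + 1), z s ω :=
          Finset.single_le_sum (fun s _ => hz_nonneg s ω) (Finset.self_mem_range_succ t)
      _ ≤ n := hzb _ ω
  have hζ_le : ∀ t ω, ζ t ω ≤ n := by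
    intro t ω
    calc ζ t ω ≤ ∑ s ∈ Finset.range (t + 1), ζ s ω :=
          Finset.single_le_sum (fun s _ => hζ_nonneg s ω) (Finset.self_mem_range_succ t)
      _ ≤ n := hζb _ ω
  have hz_int : ∀ t, Integrable (z t) μ := by
    intro t
    refine Integrable.mono' (integrable_const n)
      ((hz_adapted t).mono (F.le t) le_rfl).aestronglyMeasurable
      (Filter.Eventually.of_forall fun ω => ?_)
    rw [Real.norm_eq_abs, abs_of_nonneg (hz_nonneg t ω)]
    exact hz_le t ω
  have hu_int : ∀ t, Integrable (u t) μ := by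
    intro t
    have hg : Integrable (fun ω => (1 + n) * v t ω + n + |(μ[v (t + 1)|F t]) ω|) μ :=
      (((hv_int t).const_mul _).add (integrable_const n)).add integrable_condExp.abs
    refine Integrable.mono' hg ((hu_adapted t).mono (F.le t) le_rfl).aestronglyMeasurable ?_
    filter_upwards [hineq t] with ω hω
    rw [Real.norm_eq_abs, abs_of_nonneg (hu_nonneg t ω)]
    have h4 := neg_abs_le ((μ[v (t + 1)|F t]) ω)
    nlinarith [mul_nonneg (sub_nonneg.mpr (hζ_le t ω)) (hv_nonneg t ω), hz_le t ω]
  set S : ℕ → Ω → ℝ := fun t ω => ∑ s ∈ Finset.range t, (u s ω - z s ω) / P (s + 1) ω with hSdef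
  set X : ℕ → Ω → ℝ := fun t ω => v t ω / P t ω + S t ω with hXdef
  have hiv : ∀ t, Integrable (fun ω => v t ω / P t ω) μ := by
    intro t
    refine Integrable.mono' (hv_int t)
      (((((hv_adapted t).mono (F.le t) le_rfl)).div
        ((hPmeas t t t.le_succ).mono (F.le t) le_rfl)).aestronglyMeasurable)
      (Filter.Eventually.of_forall fun ω => ?_)
    rw [Real.norm_eq_abs, abs_of_nonneg (div_nonneg (hv_nonneg t ω) (hPpos t ω).le)]
    exact div_le_self (hv_nonneg t ω) (hP1 t ω)
  have hiuz : ∀ s, Integrable (fun ω => (u s ω - z s ω) / P (s + 1) ω) μ := by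
    intro s
    refine Integrable.mono' ((hu_int s).add (hz_int s))
      (((((hu_adapted s).mono (F.le s) le_rfl).sub
        (((hz_adapted s).mono (F.le s) le_rfl))).div
        ((hPmeas s (s + 1) le_rfl).mono (F.le s) le_rfl)).aestronglyMeasurable)
      (Filter.Eventually.of_forall fun ω => ?_)
    rw [Real.norm_eq_abs, abs_div, abs_of_pos (hPpos (s + 1) ω)]
    calc |u s ω - z s ω| / P (s + 1) ω ≤ |u s ω - z s ω| :=
          div_le_self (abs_nonneg _) (hP1 _ ω)
      _ ≤ u s ω + z s ω :=
          abs_le.mpr ⟨by linarith [hu_nonneg s ω, hz_nonneg s ω],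
            by linarith [hu_nonneg s ω, hz_nonneg s ω]⟩
  have hiS : ∀ t, Integrable (S t) μ := by
    intro t
    simp only [hSdef]
    exact integrable_finset_sum _ fun s _ => hiuz s
  have hX_int : ∀ t, Integrable (X t) μ := by
    intro t
    simp only [hXdef]
    exact (hiv t).add (hiS t)
  have hSmeas : ∀ t k, k ≤ t + 1 → StronglyMeasurable[F t] (S k) := by
    intro t k hk
    simp only [hSdef]
    apply Measurable.stronglyMeasurable
    apply Finset.measurable_sum
    intro s hs
    have hs' : s + 1 ≤ t + 1 := by have := Finset.mem_range.mp hs; omega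
    have hst : s ≤ t := by omega
    exact (((hu_adapted s).mono (F.mono hst) le_rfl).sub
      ((hz_adapted s).mono (F.mono hst) le_rfl)).div (hPmeas t (s + 1) hs')
  have hX_adapted : Adapted F X := by
    intro t
    simp only [hXdef]
    exact (((((hv_adapted t)).div
      (hPmeas t t t.le_succ)).stronglyMeasurable).add (hSmeas t t t.le_succ)).measurable
  have hcond : ∀ t, μ[X (t + 1)|F t] ≤ᵐ[μ] X t := by
    intro t
    set f : Ω → ℝ := fun ω => (P (t + 1) ω)⁻¹ with hfdef
    have hfmeas : StronglyMeasurable[F t] f :=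
      ((hPmeas t (t + 1) le_rfl).inv).stronglyMeasurable
    have hfnonneg : ∀ ω, 0 ≤ f ω := fun ω => inv_nonneg.mpr (hPpos _ ω).le
    have hfv : Integrable (f * v (t + 1)) μ := by
      have hev : f * v (t + 1) = fun ω => v (t + 1) ω / P (t + 1) ω := by
        funext ω; simp [hfdef, div_eq_inv_mul]
      rw [hev]; exact hiv (t + 1)
    have hX1 : X (t + 1) = f * v (t + 1) + S (t + 1) := by
      funext ω
      simp [hXdef, hfdef, div_eq_inv_mul]
    rw [hX1]
    have h2 : μ[S (t + 1)|F t] = S (t + 1) :=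
      condExp_of_stronglyMeasurable (F.le t) (hSmeas t (t + 1) le_rfl) (hiS (t + 1))
    have h3 : μ[f * v (t + 1)|F t] =ᵐ[μ] f * μ[v (t + 1)|F t] :=
      condExp_mul_of_stronglyMeasurable_left hfmeas hfv (hv_int (t + 1))
    filter_upwards [condExp_add hfv (hiS (t + 1)) (m := F t), h3, hineq t]
      with ω hadd h3ω hineqω
    have hXtω : X t ω = v t ω / P t ω + S t ω := by simp [hXdef]
    have hadd' : (μ[f * v (t + 1) + S (t + 1)|F t]) ω
        = (μ[f * v (t + 1)|F t]) ω + S (t + 1) ω := by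
      rw [hadd]; simp [h2]
    rw [hadd', hXtω]
    have key : (P (t + 1) ω)⁻¹ * ((1 + ζ t ω) * v t ω - u t ω + z t ω) + S (t + 1) ω
        = v t ω / P t ω + S t ω := by
      have e1 : P (t + 1) ω = P t ω * (1 + ζ t ω) := hPsucc t ω
      have h1ζ : (0:ℝ) < 1 + ζ t ω := by linarith [hζ_nonneg t ω]
      have hPt : 0 < P t ω := hPpos t ω
      have eS : S (t + 1) ω = S t ω + (u t ω - z t ω) / P (t + 1) ω := by
        simp [hSdef, Finset.sum_range_succ]
      rw [eS, e1]
      field_simp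
      ring
    have hmul : (μ[f * v (t + 1)|F t]) ω = (P (t + 1) ω)⁻¹ * (μ[v (t + 1)|F t]) ω := by
      rw [h3ω]; rfl
    rw [hmul, ← key]
    have hinv : (0:ℝ) ≤ (P (t + 1) ω)⁻¹ := inv_nonneg.mpr (hPpos _ ω).le
    have := mul_le_mul_of_nonneg_left hineqω hinv
    linarith
  have hsuper : Supermartingale X F μ := supermartingale_nat hX_adapted.stronglyAdapted hX_int hcond
  have hzPsum : ∀ t ω, ∑ s ∈ Finset.range t, z s ω / P (s + 1) ω ≤ n := fun t ω =>
    le_trans (Finset.sum_le_sum fun s _ => div_le_self (hz_nonneg s ω) (hP1 _ ω)) (hzb t ω)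
  have hXlb : ∀ t ω, -n ≤ X t ω := by
    intro t ω
    have h1 : -(∑ s ∈ Finset.range t, z s ω / P (s + 1) ω) ≤ S t ω := by
      simp only [hSdef]
      rw [← Finset.sum_neg_distrib]
      apply Finset.sum_le_sum
      intro s _
      rw [← neg_div]
      gcongr
      · exact (hPpos _ ω).le
      · linarith [hu_nonneg s ω]
    have h3 : 0 ≤ v t ω / P t ω := div_nonneg (hv_nonneg t ω) (hPpos t ω).le
    have hXtω : X t ω = v t ω / P t ω + S t ω := by simp [hXdef]
    rw [hXtω]
    linarith [hzPsum t ω]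
  have hX0 : ∀ t, ∫ ω, X t ω ∂μ ≤ ∫ ω, X 0 ω ∂μ := by
    intro t
    have h := hsuper.2.1 0 t (Nat.zero_le t)
    calc ∫ ω, X t ω ∂μ = ∫ ω, (μ[X t|F 0]) ω ∂μ := (integral_condExp (F.le 0)).symm
      _ ≤ ∫ ω, X 0 ω ∂μ := integral_mono_ae integrable_condExp (hX_int 0) h
  have hbdd : ∀ t, eLpNorm (X t) 1 μ ≤ ENNReal.ofReal (∫ ω, X 0 ω ∂μ + 2 * n) := by
    intro t
    rw [eLpNorm_one_eq_lintegral_enorm, ← ofReal_integral_norm_eq_lintegral_enorm (hX_int t)]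
    apply ENNReal.ofReal_le_ofReal
    calc ∫ ω, ‖X t ω‖ ∂μ ≤ ∫ ω, (X t ω + 2 * n) ∂μ := by
          apply integral_mono (hX_int t).norm ((hX_int t).add (integrable_const _))
          intro ω
          simp only [Pi.add_apply, Real.norm_eq_abs]
          exact abs_le.mpr ⟨by linarith [hXlb t ω], by linarith [hXlb t ω]⟩
      _ = ∫ ω, X t ω ∂μ + 2 * n := by
          rw [integral_add (hX_int t) (integrable_const _), integral_const]; simp
      _ ≤ ∫ ω, X 0 ω ∂μ + 2 * n := by linarith [hX0 t]
  have hconv : ∀ᵐ ω ∂μ, ∃ c, Tendsto (fun t => X t ω) atTop (nhds c) := by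
    have hsub : Submartingale (-X) F μ := hsuper.neg
    have hbdd' : ∀ t, eLpNorm ((-X) t) 1 μ
        ≤ ((∫ ω, X 0 ω ∂μ + 2 * n).toNNReal : ENNReal) := by
      intro t
      have hneg : (-X) t = -(X t) := rfl
      rw [hneg, eLpNorm_neg]
      exact hbdd t
    filter_upwards [hsub.exists_ae_tendsto_of_bdd hbdd'] with ω hω
    obtain ⟨c, hc⟩ := hω
    exact ⟨-c, by simpa using hc.neg⟩
  filter_upwards [hconv] with ω hω
  obtain ⟨L, hL⟩ := hω
  have hsz : Summable (fun s => z s ω / P (s + 1) ω) :=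
    summable_of_sum_range_le (fun s => div_nonneg (hz_nonneg s ω) (hPpos _ ω).le)
      (fun t => hzPsum t ω)
  obtain ⟨M, hM⟩ : ∃ M, ∀ t, X t ω ≤ M := by
    obtain ⟨M, hM⟩ := hL.bddAbove_range
    exact ⟨M, fun t => hM ⟨t, rfl⟩⟩
  have hXeq : ∀ t, X t ω = v t ω / P t ω + S t ω := fun t => by simp [hXdef]
  have hSeq : ∀ t, S t ω = ∑ s ∈ Finset.range t, (u s ω - z s ω) / P (s + 1) ω :=
    fun t => by simp [hSdef]
  have hsu : Summable (fun s => u s ω / P (s + 1) ω) := by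
    apply summable_of_sum_range_le
      (f := fun s => u s ω / P (s + 1) ω) (c := M + n)
      (fun s => div_nonneg (hu_nonneg s ω) (hPpos _ ω).le)
    intro t
    have e1 : ∑ s ∈ Finset.range t, u s ω / P (s + 1) ω
        - ∑ s ∈ Finset.range t, z s ω / P (s + 1) ω = S t ω := by
      rw [hSeq, ← Finset.sum_sub_distrib]
      exact Finset.sum_congr rfl fun s _ => (sub_div _ _ _).symm
    have h3 : 0 ≤ v t ω / P t ω := div_nonneg (hv_nonneg t ω) (hPpos t ω).le
    have := hM t
    rw [hXeq t] at this
    linarith [hzPsum t ω]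
  have hbd : BddAbove (Set.range fun t => P t ω) := by
    refine ⟨Real.exp n, ?_⟩
    rintro x ⟨t, rfl⟩
    exact hPle t ω
  have hQt : Tendsto (fun t => P t ω) atTop (nhds (⨆ t, P t ω)) :=
    tendsto_atTop_ciSup (hPmono ω) hbd
  have hQ1 : (1:ℝ) ≤ ⨆ t, P t ω := le_trans (hP1 0 ω) (le_ciSup hbd 0)
  have huz : Summable (fun s => (u s ω - z s ω) / P (s + 1) ω) := by
    have hfe : (fun s => (u s ω - z s ω) / P (s + 1) ω)
        = fun s => u s ω / P (s + 1) ω - z s ω / P (s + 1) ω :=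
      funext fun s => sub_div _ _ _
    rw [hfe]; exact hsu.sub hsz
  have hSt : Tendsto (fun t => S t ω) atTop
      (nhds (∑' s, (u s ω - z s ω) / P (s + 1) ω)) := by
    have := huz.hasSum.tendsto_sum_nat
    simpa [hSeq] using this
  have hvP : Tendsto (fun t => v t ω / P t ω) atTop
      (nhds (L - ∑' s, (u s ω - z s ω) / P (s + 1) ω)) := by
    have hfe : (fun t => v t ω / P t ω) = fun t => X t ω - S t ω :=
      funext fun t => by rw [hXeq t]; ring
    rw [hfe]; exact hL.sub hSt
  have hv_tendsto : Tendsto (fun t => v t ω) atTop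
      (nhds ((L - ∑' s, (u s ω - z s ω) / P (s + 1) ω) * ⨆ t, P t ω)) := by
    have hfe : (fun t => v t ω) = fun t => (v t ω / P t ω) * P t ω :=
      funext fun t => (div_mul_cancel₀ _ (hPpos t ω).ne').symm
    rw [hfe]; exact hvP.mul hQt
  have hu_sum : Summable (fun s => u s ω) := by
    refine Summable.of_nonneg_of_le (fun s => hu_nonneg s ω) (fun s => ?_)
      (hsu.mul_left (Real.exp n))
    calc u s ω = (u s ω / P (s + 1) ω) * P (s + 1) ω :=
          (div_mul_cancel₀ _ (hPpos (s + 1) ω).ne').symm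
      _ ≤ (u s ω / P (s + 1) ω) * Real.exp n := by
          apply mul_le_mul_of_nonneg_left (hPle _ ω)
            (div_nonneg (hu_nonneg s ω) (hPpos _ ω).le)
      _ = Real.exp n * (u s ω / P (s + 1) ω) := mul_comm _ _
  refine ⟨hu_sum, _, ?_, hv_tendsto⟩
  exact ge_of_tendsto' hv_tendsto fun t => hv_nonneg t ω

theorem stmt_15 {Ω : Type*} {m0 : MeasurableSpace Ω} (μ : Measure Ω) [IsProbabilityMeasure μ]
    (F : Filtration ℕ m0) (v ζ u z : ℕ → Ω → ℝ)
    (hv_adapted : Adapted F v) (hζ_adapted : Adapted F ζ)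
    (hu_adapted : Adapted F u) (hz_adapted : Adapted F z)
    (hv_nonneg : ∀ t ω, 0 ≤ v t ω) (hζ_nonneg : ∀ t ω, 0 ≤ ζ t ω)
    (hu_nonneg : ∀ t ω, 0 ≤ u t ω) (hz_nonneg : ∀ t ω, 0 ≤ z t ω)
    (hv_int : ∀ t, Integrable (v t) μ)
    (hineq : ∀ t, ∀ᵐ ω ∂μ,
      (μ[v (t + 1)|F t]) ω ≤ (1 + ζ t ω) * v t ω - u t ω + z t ω)
    (hz_sum : ∀ᵐ ω ∂μ, Summable (fun t => z t ω))
    (hζ_sum : ∀ᵐ ω ∂μ, Summable (fun t => ζ t ω)) :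
    ∀ᵐ ω ∂μ, Summable (fun t => u t ω) ∧
      ∃ c : ℝ, 0 ≤ c ∧ Tendsto (fun t => v t ω) atTop (nhds c) := by
  classical
  set I : ℕ → ℕ → Ω → ℝ := fun n t ω =>
    if (∑ s ∈ Finset.range t, z s ω) ≤ (n : ℝ) ∧ (∑ s ∈ Finset.range t, ζ s ω) ≤ (n : ℝ)
    then 1 else 0 with hIdef
  have hI01 : ∀ n t ω, I n t ω = 0 ∨ I n t ω = 1 := by
    intro n t ω; simp only [hIdef]; split <;> simp
  have hI_nonneg : ∀ n t ω, 0 ≤ I n t ω := by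
    intro n t ω; rcases hI01 n t ω with h | h <;> rw [h] <;> norm_num
  have hI_le_one : ∀ n t ω, I n t ω ≤ 1 := by
    intro n t ω; rcases hI01 n t ω with h | h <;> rw [h] <;> norm_num
  have hI_cond : ∀ n t ω, I n t ω = 1 →
      (∑ s ∈ Finset.range t, z s ω) ≤ (n : ℝ) ∧ (∑ s ∈ Finset.range t, ζ s ω) ≤ (n : ℝ) := by
    intro n t ω h
    by_contra hc
    rw [hIdef] at h
    simp only [if_neg hc] at h
    norm_num at h
  have hI_mono : ∀ n s t ω, s ≤ t → I n t ω = 1 → I n s ω = 1 := by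
    intro n s t ω hst h
    have hc := hI_cond n t ω h
    rw [hIdef]
    simp only
    rw [if_pos]
    constructor
    · exact le_trans (Finset.sum_le_sum_of_subset_of_nonneg
        (Finset.range_subset_range.mpr hst) (fun i _ _ => hz_nonneg i ω)) hc.1
    · exact le_trans (Finset.sum_le_sum_of_subset_of_nonneg
        (Finset.range_subset_range.mpr hst) (fun i _ _ => hζ_nonneg i ω)) hc.2
  have hI_meas : ∀ n t k, k ≤ t + 1 → Measurable[F t] (I n k) := by
    intro n t k hk
    simp only [hIdef]
    have hsum_meas : ∀ (f : ℕ → Ω → ℝ), Adapted F f → Measurable[F t]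
        (fun ω => ∑ s ∈ Finset.range k, f s ω) := by
      intro f hf
      apply Finset.measurable_sum
      intro s hs
      have hst : s ≤ t := by have := Finset.mem_range.mp hs; omega
      exact ((hf s).mono (F.mono hst) le_rfl)
    refine Measurable.ite ?_ measurable_const measurable_const
    exact MeasurableSet.inter
      (measurableSet_le (hsum_meas z hz_adapted) measurable_const)
      (measurableSet_le (hsum_meas ζ hζ_adapted) measurable_const)
  set v' : ℕ → ℕ → Ω → ℝ := fun n t ω => v t ω * I n t ω with hv'def
  set ζ' : ℕ → ℕ → Ω → ℝ := fun n t ω => ζ t ω * I n (t + 1) ω with hζ'def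
  set u' : ℕ → ℕ → Ω → ℝ := fun n t ω => u t ω * I n (t + 1) ω with hu'def
  set z' : ℕ → ℕ → Ω → ℝ := fun n t ω => z t ω * I n (t + 1) ω with hz'def
  have Hn : ∀ n : ℕ, ∀ᵐ ω ∂μ, Summable (fun t => u' n t ω) ∧
      ∃ c : ℝ, 0 ≤ c ∧ Tendsto (fun t => v' n t ω) atTop (nhds c) := by
    intro n
    apply robbins_aux μ F (v' n) (ζ' n) (u' n) (z' n) (n : ℝ)
    · intro t
      exact ((hv_adapted t).mul (hI_meas n t t t.le_succ))
    · intro t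
      exact ((hζ_adapted t).mul (hI_meas n t (t + 1) le_rfl))
    · intro t
      exact ((hu_adapted t).mul (hI_meas n t (t + 1) le_rfl))
    · intro t
      exact ((hz_adapted t).mul (hI_meas n t (t + 1) le_rfl))
    · intro t ω; exact mul_nonneg (hv_nonneg t ω) (hI_nonneg n t ω)
    · intro t ω; exact mul_nonneg (hζ_nonneg t ω) (hI_nonneg n _ ω)
    · intro t ω; exact mul_nonneg (hu_nonneg t ω) (hI_nonneg n _ ω)
    · intro t ω; exact mul_nonneg (hz_nonneg t ω) (hI_nonneg n _ ω)
    · -- integrability of v'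
      intro t
      refine Integrable.mono' (hv_int t)
        (((((hv_adapted t).mono (F.le t) le_rfl)).mul
          ((hI_meas n t t t.le_succ).mono (F.le t) le_rfl)).aestronglyMeasurable)
        (Filter.Eventually.of_forall fun ω => ?_)
      rw [Real.norm_eq_abs, abs_of_nonneg (mul_nonneg (hv_nonneg t ω) (hI_nonneg n t ω))]
      calc v t ω * I n t ω ≤ v t ω * 1 :=
            mul_le_mul_of_nonneg_left (hI_le_one n t ω) (hv_nonneg t ω)
        _ = v t ω := mul_one _
    · -- conditional expectation inequality
      intro t
      have hg : Ω → ℝ := fun ω => I n (t + 1) ω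
      have hgmeas : StronglyMeasurable[F t] (fun ω => I n (t + 1) ω) :=
        (hI_meas n t (t + 1) le_rfl).stronglyMeasurable
      have hprod : Integrable ((fun ω => I n (t + 1) ω) * v (t + 1)) μ := by
        refine Integrable.mono' (hv_int (t + 1))
          ((((hI_meas n t (t + 1) le_rfl).mono (F.le t) le_rfl).mul
            (((hv_adapted (t + 1)).mono (F.le (t + 1)) le_rfl))).aestronglyMeasurable)
          (Filter.Eventually.of_forall fun ω => ?_)
        simp only [Pi.mul_apply, Real.norm_eq_abs]
        rw [abs_of_nonneg (mul_nonneg (hI_nonneg n _ ω) (hv_nonneg _ ω))]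
        calc I n (t + 1) ω * v (t + 1) ω ≤ 1 * v (t + 1) ω :=
              mul_le_mul_of_nonneg_right (hI_le_one n _ ω) (hv_nonneg _ ω)
          _ = v (t + 1) ω := one_mul _
      have hrw : v' n (t + 1) = (fun ω => I n (t + 1) ω) * v (t + 1) := by
        funext ω; simp [hv'def, mul_comm]
      rw [hrw]
      have h3 : μ[(fun ω => I n (t + 1) ω) * v (t + 1)|F t]
          =ᵐ[μ] (fun ω => I n (t + 1) ω) * μ[v (t + 1)|F t] :=
        condExp_mul_of_stronglyMeasurable_left hgmeas hprod (hv_int (t + 1))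
      filter_upwards [h3, hineq t] with ω hm hi
      rw [hm]
      simp only [Pi.mul_apply]
      simp only [hζ'def, hu'def, hz'def, hv'def]
      rcases hI01 n (t + 1) ω with h0 | h1
      · rw [h0]
        have h2 : 0 ≤ v t ω * I n t ω := mul_nonneg (hv_nonneg t ω) (hI_nonneg n t ω)
        nlinarith
      · have ht1 : I n t ω = 1 := hI_mono n t (t + 1) ω t.le_succ h1
        rw [h1, ht1]
        simpa using hi
    · -- partial sums of z' bounded
      intro T ω
      induction T with
      | zero => simp
      | succ T ih =>
        rcases hI01 n (T + 1) ω with h0 | h1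
        · rw [Finset.sum_range_succ]
          have : z' n T ω = 0 := by simp [hz'def, h0]
          rw [this, add_zero]
          exact ih
        · have he : ∀ s ∈ Finset.range (T + 1), z' n s ω = z s ω := by
            intro s hs
            have hs' : s + 1 ≤ T + 1 := by have := Finset.mem_range.mp hs; omega
            have := hI_mono n (s + 1) (T + 1) ω hs' h1
            simp [hz'def, this]
          rw [Finset.sum_congr rfl he]
          exact (hI_cond n (T + 1) ω h1).1
    · -- partial sums of ζ' bounded
      intro T ω
      induction T with
      | zero => simp
      | succ T ih =>
        rcases hI01 n (T + 1) ω with h0 | h1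
        · rw [Finset.sum_range_succ]
          have : ζ' n T ω = 0 := by simp [hζ'def, h0]
          rw [this, add_zero]
          exact ih
        · have he : ∀ s ∈ Finset.range (T + 1), ζ' n s ω = ζ s ω := by
            intro s hs
            have hs' : s + 1 ≤ T + 1 := by have := Finset.mem_range.mp hs; omega
            have := hI_mono n (s + 1) (T + 1) ω hs' h1
            simp [hζ'def, this]
          rw [Finset.sum_congr rfl he]
          exact (hI_cond n (T + 1) ω h1).2
  have Hall : ∀ᵐ ω ∂μ, ∀ n : ℕ, Summable (fun t => u' n t ω) ∧
      ∃ c : ℝ, 0 ≤ c ∧ Tendsto (fun t => v' n t ω) atTop (nhds c) := ae_all_iff.mpr Hn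
  filter_upwards [Hall, hz_sum, hζ_sum] with ω hω hzs hζs
  obtain ⟨N, hN⟩ := exists_nat_ge (max (∑' t, z t ω) (∑' t, ζ t ω))
  have hIone : ∀ t, I N t ω = 1 := by
    intro t
    rw [hIdef]
    simp only
    rw [if_pos]
    constructor
    · exact le_trans (Summable.sum_le_tsum (Finset.range t) (fun s _ => hz_nonneg s ω) hzs)
        (le_trans (le_max_left _ _) hN)
    · exact le_trans (Summable.sum_le_tsum (Finset.range t) (fun s _ => hζ_nonneg s ω) hζs)
        (le_trans (le_max_right _ _) hN)
  obtain ⟨hsum, c, hc0, hct⟩ := hω N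
  have heu : (fun t => u' N t ω) = fun t => u t ω := by
    funext t; simp [hu'def, hIone (t + 1)]
  have hev : (fun t => v' N t ω) = fun t => v t ω := by
    funext t; simp [hv'def, hIone t]
  rw [heu] at hsum
  rw [hev] at hct
  exact ⟨hsum, c, hc0, hct⟩
end

section
/- Let f : ℝ^d → ℝ be convex and continuous with nonempty optimizer set X* = argmin_{x∈ℝ^d} f(x). Let {y(t)} be a sequence of random vectors adapted to a filtration {F_t} satisfying, almost surely for all t ≥ 1 and all x* ∈ X*, E[‖y(t+1) − x*‖² | F_t] ≤ (1 + ζ(t))‖y(t) − x*‖² − ξ(t)(f(y(t)) − f(x*)) + z(t), where {ζ(t)}, {ξ(t)}, {z(t)} are nonnegative sequences with Σ_{t=1}^∞ ζ(t) < ∞, Σ_{t=1}^∞ ξ(t) = ∞, and Σ_{t=1}^∞ z(t) < ∞. Then {y(t)} converges almost surely to some point x̃ ∈ X*. -/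
open MeasureTheory Filter Topology


-- Robbins-Siegmund (without the ξ term): a.s. convergence of V
lemma rs_conv {Ω : Type*} {m0 : MeasurableSpace Ω} (μ : Measure Ω) [IsProbabilityMeasure μ]
    (F : Filtration ℕ m0) (V : ℕ → Ω → ℝ)
    (hadp : Adapted F V) (hint : ∀ t, Integrable (V t) μ)
    (hV0 : ∀ t ω, 0 ≤ V t ω)
    (ζ z : ℕ → ℝ) (hζ0 : ∀ t, 0 ≤ ζ t) (hz0 : ∀ t, 0 ≤ z t)
    (hζ : Summable ζ) (hz : Summable z)
    (hineq : ∀ t, ∀ᵐ ω ∂μ, (μ[V (t+1)|F t]) ω ≤ (1 + ζ t) * V t ω + z t) :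
    ∀ᵐ ω ∂μ, ∃ L, Tendsto (fun t => V t ω) atTop (𝓝 L) := by
  classical
  set P : ℕ → ℝ := fun t => ∏ s ∈ Finset.range t, (1 + ζ s) with hP
  have hP1 : ∀ t, 1 ≤ P t := by
    intro t
    induction t with
    | zero => simp [hP]
    | succ n ih =>
      have : P (n+1) = P n * (1 + ζ n) := Finset.prod_range_succ _ _
      rw [this]
      nlinarith [hζ0 n]
  have hPpos : ∀ t, 0 < P t := fun t => lt_of_lt_of_le one_pos (hP1 t)
  have hPsucc : ∀ t, P (t+1) = P t * (1 + ζ t) := fun t => Finset.prod_range_succ _ _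
  have hPmono : Monotone P := by
    apply monotone_nat_of_le_succ
    intro t
    rw [hPsucc t]
    nlinarith [hPpos t, hζ0 t]
  have hPbdd : ∀ t, P t ≤ Real.exp (∑' s, ζ s) := by
    intro t
    calc P t ≤ ∏ s ∈ Finset.range t, Real.exp (ζ s) := by
          apply Finset.prod_le_prod
          · intro i _; nlinarith [hζ0 i]
          · intro i _; linarith [Real.add_one_le_exp (ζ i)]
      _ = Real.exp (∑ s ∈ Finset.range t, ζ s) := by rw [Real.exp_sum]
      _ ≤ Real.exp (∑' s, ζ s) := by
          apply Real.exp_le_exp.2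
          exact hζ.sum_le_tsum _ (fun i _ => hζ0 i)
  set Z : ℕ → ℝ := fun t => ∑ s ∈ Finset.range t, z s / P (s+1) with hZ
  have hZ0 : ∀ t, 0 ≤ Z t := by
    intro t; apply Finset.sum_nonneg; intro i _
    exact div_nonneg (hz0 i) (hPpos _).le
  have hZbdd : ∀ t, Z t ≤ ∑' s, z s := by
    intro t
    calc Z t ≤ ∑ s ∈ Finset.range t, z s := by
          apply Finset.sum_le_sum; intro i _
          exact div_le_self (hz0 i) (hP1 _)
      _ ≤ ∑' s, z s := hz.sum_le_tsum _ (fun i _ => hz0 i)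
  have hZmono : Monotone Z := by
    apply monotone_nat_of_le_succ
    intro t
    rw [hZ]
    simp only
    rw [Finset.sum_range_succ]
    have : 0 ≤ z t / P (t+1) := div_nonneg (hz0 t) (hPpos _).le
    linarith
  set C : ℝ := ∑' s, z s with hC
  have hC0 : 0 ≤ C := tsum_nonneg hz0
  set W : ℕ → Ω → ℝ := fun t ω => (P t)⁻¹ * V t ω - Z t with hW
  have hWadp : StronglyAdapted F W := by
    intro t
    exact (((hadp t).const_mul _).sub measurable_const).stronglyMeasurable
  have hWint : ∀ t, Integrable (W t) μ := by
    intro t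
    exact ((hint t).const_mul _).sub (integrable_const _)
  have hsup : Supermartingale W F μ := by
    apply supermartingale_nat hWadp hWint
    intro t
    have h1 : W (t+1) = ((P (t+1))⁻¹ • V (t+1)) - (fun _ => Z (t+1)) := by
      funext ω; simp [hW, smul_eq_mul]
    have h2 : μ[W (t+1)|F t] =ᵐ[μ] μ[(P (t+1))⁻¹ • V (t+1)|F t] - μ[(fun _ => Z (t+1))|F t] := by
      rw [h1]
      exact condExp_sub ((hint (t+1)).smul (P (t+1))⁻¹) (integrable_const _) _
    have h3 : μ[(P (t+1))⁻¹ • V (t+1)|F t] =ᵐ[μ] (P (t+1))⁻¹ • μ[V (t+1)|F t] :=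
      condExp_smul _ _ _
    have h4 : μ[(fun _ : Ω => Z (t+1))|F t] = fun _ => Z (t+1) := condExp_const (F.le t) _
    filter_upwards [hineq t, h2, h3] with ω hand h2ω h3ω
    have key : (μ[W (t+1)|F t]) ω = (P (t+1))⁻¹ * (μ[V (t+1)|F t]) ω - Z (t+1) := by
      rw [h2ω]
      simp only [Pi.sub_apply, h4, h3ω, Pi.smul_apply, smul_eq_mul]
    rw [key]
    have hZt : Z (t+1) = Z t + z t / P (t+1) := Finset.sum_range_succ _ _
    have hPt : P (t+1) = P t * (1 + ζ t) := hPsucc t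
    have hp := hPpos t
    have hq : (0:ℝ) < 1 + ζ t := by nlinarith [hζ0 t]
    have hinv : (0:ℝ) ≤ (P (t+1))⁻¹ := inv_nonneg.mpr (hPpos _).le
    have h5 : (P (t+1))⁻¹ * (μ[V (t+1)|F t]) ω ≤ (P (t+1))⁻¹ * ((1 + ζ t) * V t ω + z t) :=
      mul_le_mul_of_nonneg_left hand hinv
    have h6 : (P (t+1))⁻¹ * ((1 + ζ t) * V t ω + z t) = (P t)⁻¹ * V t ω + z t / P (t+1) := by
      rw [hPt]
      field_simp
    simp only [hW]
    rw [hZt]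
    linarith
  -- lower bound and L¹ bound
  have hWlb : ∀ t ω, -C ≤ W t ω := by
    intro t ω
    have h1 : 0 ≤ (P t)⁻¹ * V t ω := mul_nonneg (inv_nonneg.mpr (hPpos _).le) (hV0 t ω)
    have := hZbdd t
    simp only [hW]
    linarith
  have hWabs : ∀ t ω, |W t ω| ≤ W t ω + 2 * C := by
    intro t ω
    rcases abs_cases (W t ω) with ⟨h, _⟩ | ⟨h, _⟩
    · linarith
    · have := hWlb t ω; linarith
  have hL1 : ∀ t, ∫ ω, |W t ω| ∂μ ≤ ∫ ω, W 0 ω ∂μ + 2 * C := by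
    intro t
    have hWle : ∫ ω, W t ω ∂μ ≤ ∫ ω, W 0 ω ∂μ := by
      have h := hsup.setIntegral_le (Nat.zero_le t) (MeasurableSet.univ)
      simpa [setIntegral_univ] using h
    calc ∫ ω, |W t ω| ∂μ ≤ ∫ ω, (W t ω + 2 * C) ∂μ := by
          apply integral_mono (hWint t).abs ((hWint t).add (integrable_const _))
          intro ω; exact hWabs t ω
      _ = ∫ ω, W t ω ∂μ + 2 * C := by
          rw [integral_add (hWint t) (integrable_const _)]
          simp
      _ ≤ ∫ ω, W 0 ω ∂μ + 2 * C := by linarith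
  -- eLpNorm bound
  set R0 : ℝ := ∫ ω, W 0 ω ∂μ + 2 * C with hR0
  have hsnorm : ∀ t, eLpNorm ((-W) t) 1 μ ≤ ENNReal.ofReal R0 := by
    intro t
    have h1 : eLpNorm ((-W) t) 1 μ = eLpNorm (W t) 1 μ := by
      simp [eLpNorm_neg]
    rw [h1, eLpNorm_one_eq_lintegral_enorm,
      ← ofReal_integral_norm_eq_lintegral_enorm (hWint t)]
    apply ENNReal.ofReal_le_ofReal
    simpa [Real.norm_eq_abs] using hL1 t
  have hconv := (hsup.neg.exists_ae_tendsto_of_bdd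
    (R := R0.toNNReal) (fun t => by
      simpa [ENNReal.ofReal] using hsnorm t))
  filter_upwards [hconv] with ω hω
  obtain ⟨c, hc⟩ := hω
  have hWc : Tendsto (fun t => W t ω) atTop (𝓝 (-c)) := by
    have := hc.neg
    simpa using this
  have hPlim : Tendsto P atTop (𝓝 (⨆ t, P t)) :=
    tendsto_atTop_ciSup hPmono ⟨Real.exp (∑' s, ζ s), fun x ⟨t, ht⟩ => ht ▸ hPbdd t⟩
  have hZlim : Tendsto Z atTop (𝓝 (⨆ t, Z t)) :=
    tendsto_atTop_ciSup hZmono ⟨C, fun x ⟨t, ht⟩ => ht ▸ hZbdd t⟩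
  refine ⟨(⨆ t, P t) * (-c + ⨆ t, Z t), ?_⟩
  have hVeq : ∀ t, V t ω = P t * (W t ω + Z t) := by
    intro t
    simp only [hW]
    rw [sub_add_cancel, ← mul_assoc, mul_inv_cancel₀ (hPpos t).ne', one_mul]
  simp_rw [hVeq]
  exact hPlim.mul (hWc.add hZlim)


lemma one_le_prod_one_add (ζ : ℕ → ℝ) (hζ0 : ∀ t, 0 ≤ ζ t) (n : ℕ) :
    1 ≤ ∏ s ∈ Finset.range n, (1 + ζ s) := by
  induction n with
  | zero => simp
  | succ m ihm =>
    rw [Finset.prod_range_succ]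
    nlinarith [hζ0 m]

lemma ae_summable_aux {Ω : Type*} {m0 : MeasurableSpace Ω} (μ : Measure Ω)
    [IsProbabilityMeasure μ] (F : Filtration ℕ m0)
    (V g : ℕ → Ω → ℝ)
    (hVint : ∀ t, Integrable (V t) μ) (hV0 : ∀ t ω, 0 ≤ V t ω)
    (hg0 : ∀ t ω, 0 ≤ g t ω)
    (hgmeas : ∀ t, AEStronglyMeasurable (g t) μ)
    (ζ z : ℕ → ℝ) (hζ0 : ∀ t, 0 ≤ ζ t) (hz0 : ∀ t, 0 ≤ z t)
    (hζ : Summable ζ) (hz : Summable z)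
    (hineq : ∀ t, ∀ᵐ ω ∂μ, g t ω ≤ (1 + ζ t) * V t ω + z t - (μ[V (t+1)|F t]) ω) :
    ∀ᵐ ω ∂μ, Summable (fun t => g t ω) := by
  classical
  set RHS : ℕ → Ω → ℝ := fun t ω => (1 + ζ t) * V t ω + z t - (μ[V (t+1)|F t]) ω with hRHS
  have hRHSint : ∀ t, Integrable (RHS t) μ := fun t =>
    (((hVint t).const_mul _).add (integrable_const _)).sub integrable_condExp
  have hgint : ∀ t, Integrable (g t) μ := by
    intro t
    apply Integrable.mono' (hRHSint t) (hgmeas t)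
    filter_upwards [hineq t] with ω hω
    rw [Real.norm_eq_abs, abs_of_nonneg (hg0 t ω)]
    exact hω
  set a : ℕ → ℝ := fun t => ∫ ω, V t ω ∂μ with ha
  set b : ℕ → ℝ := fun t => ∫ ω, g t ω ∂μ with hb
  have ha0 : ∀ t, 0 ≤ a t := fun t => integral_nonneg (hV0 t)
  have hb0 : ∀ t, 0 ≤ b t := fun t => integral_nonneg (hg0 t)
  have hble : ∀ t, b t ≤ (1 + ζ t) * a t + z t - a (t + 1) := by
    intro t
    have h1 : b t ≤ ∫ ω, RHS t ω ∂μ :=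
      integral_mono_ae (hgint t) (hRHSint t) (hineq t)
    have h2 : ∫ ω, RHS t ω ∂μ = (1 + ζ t) * a t + z t - a (t + 1) := by
      have hint1 : Integrable (fun ω => (1 + ζ t) * V t ω + z t) μ :=
        ((hVint t).const_mul _).add (integrable_const _)
      have hint2 : Integrable (fun ω => (1 + ζ t) * V t ω) μ := (hVint t).const_mul _
      show ∫ ω, ((1 + ζ t) * V t ω + z t) - (μ[V (t+1)|F t]) ω ∂μ = _
      rw [integral_sub hint1 integrable_condExp,
        integral_add hint2 (integrable_const _),
        integral_const_mul, integral_const, integral_condExp (F.le t)]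
      simp [ha]
    linarith
  have hanext : ∀ t, a (t + 1) ≤ (1 + ζ t) * a t + z t := by
    intro t; have := hble t; have := hb0 t; linarith
  -- uniform bound on a
  set K : ℝ := Real.exp (∑' s, ζ s) * (a 0 + ∑' s, z s) with hK
  have htsz : 0 ≤ ∑' s, z s := tsum_nonneg hz0
  have htsζ : 0 ≤ ∑' s, ζ s := tsum_nonneg hζ0
  have hK0 : 0 ≤ K := mul_nonneg (Real.exp_pos _).le (by linarith [ha0 0])
  have haK : ∀ t, a t ≤ K := by
    have claim : ∀ t, a t ≤ (∏ s ∈ Finset.range t, (1 + ζ s)) * (a 0 + ∑ s ∈ Finset.range t, z s) := by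
      intro t
      induction t with
      | zero => simp
      | succ n ih =>
        have hPpos : (0:ℝ) < ∏ s ∈ Finset.range n, (1 + ζ s) :=
          Finset.prod_pos fun i _ => by linarith [hζ0 i]
        have hP1 : (1:ℝ) ≤ ∏ s ∈ Finset.range n, (1 + ζ s) :=
          one_le_prod_one_add ζ hζ0 n
        have hS0 : 0 ≤ ∑ s ∈ Finset.range n, z s := Finset.sum_nonneg fun i _ => hz0 i
        rw [Finset.prod_range_succ, Finset.sum_range_succ]
        calc a (n + 1) ≤ (1 + ζ n) * a n + z n := hanext n
          _ ≤ (1 + ζ n) * ((∏ s ∈ Finset.range n, (1 + ζ s)) * (a 0 + ∑ s ∈ Finset.range n, z s)) + z n := by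
              have h1 : (0:ℝ) ≤ 1 + ζ n := by linarith [hζ0 n]
              nlinarith [ih]
          _ ≤ (∏ s ∈ Finset.range n, (1 + ζ s)) * (1 + ζ n) * (a 0 + (∑ s ∈ Finset.range n, z s + z n)) := by
              have h1 : (1:ℝ) ≤ (∏ s ∈ Finset.range n, (1 + ζ s)) * (1 + ζ n) := by
                nlinarith [hζ0 n]
              nlinarith [hz0 n]
    intro t
    have h1 := claim t
    have hPb : (∏ s ∈ Finset.range t, (1 + ζ s)) ≤ Real.exp (∑' s, ζ s) := by
      calc (∏ s ∈ Finset.range t, (1 + ζ s)) ≤ ∏ s ∈ Finset.range t, Real.exp (ζ s) :=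
            Finset.prod_le_prod (fun i _ => by linarith [hζ0 i])
              (fun i _ => by linarith [Real.add_one_le_exp (ζ i)])
        _ = Real.exp (∑ s ∈ Finset.range t, ζ s) := by rw [Real.exp_sum]
        _ ≤ Real.exp (∑' s, ζ s) := Real.exp_le_exp.2 (hζ.sum_le_tsum _ (fun i _ => hζ0 i))
    have hSb : (a 0 + ∑ s ∈ Finset.range t, z s) ≤ a 0 + ∑' s, z s := by
      have := hz.sum_le_tsum (Finset.range t) (fun i _ => hz0 i)
      linarith
    have hPpos : (0:ℝ) < ∏ s ∈ Finset.range t, (1 + ζ s) :=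
      Finset.prod_pos fun i _ => by linarith [hζ0 i]
    have hS0 : 0 ≤ a 0 + ∑ s ∈ Finset.range t, z s := by
      have : 0 ≤ ∑ s ∈ Finset.range t, z s := Finset.sum_nonneg fun i _ => hz0 i
      linarith [ha0 0]
    calc a t ≤ (∏ s ∈ Finset.range t, (1 + ζ s)) * (a 0 + ∑ s ∈ Finset.range t, z s) := h1
      _ ≤ Real.exp (∑' s, ζ s) * (a 0 + ∑' s, z s) := by nlinarith [(Real.exp_pos (∑' s, ζ s)).le]
  -- summability of b
  have hbsum : Summable b := by
    apply summable_of_sum_range_le hb0 (c := a 0 + K * (∑' s, ζ s) + ∑' s, z s)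
    intro T
    have h1 : ∀ t ∈ Finset.range T, b t ≤ (a t - a (t+1)) + (ζ t * K + z t) := by
      intro t _
      have h2 := hble t
      have h3 : ζ t * a t ≤ ζ t * K := mul_le_mul_of_nonneg_left (haK t) (hζ0 t)
      nlinarith
    calc ∑ t ∈ Finset.range T, b t
        ≤ ∑ t ∈ Finset.range T, ((a t - a (t+1)) + (ζ t * K + z t)) := Finset.sum_le_sum h1
      _ = (a 0 - a T) + (∑ t ∈ Finset.range T, ζ t * K + ∑ t ∈ Finset.range T, z t) := by
          rw [Finset.sum_add_distrib, Finset.sum_range_sub' a T, Finset.sum_add_distrib]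
      _ ≤ a 0 + (K * (∑' s, ζ s) + ∑' s, z s) := by
          have h4 : ∑ t ∈ Finset.range T, ζ t * K ≤ K * (∑' s, ζ s) := by
            rw [← Finset.sum_mul, mul_comm]
            exact mul_le_mul_of_nonneg_left (hζ.sum_le_tsum _ (fun i _ => hζ0 i)) hK0
          have h5 : ∑ t ∈ Finset.range T, z t ≤ ∑' s, z s := hz.sum_le_tsum _ (fun i _ => hz0 i)
          have h6 := ha0 T
          linarith
      _ = a 0 + K * (∑' s, ζ s) + ∑' s, z s := by ring
  -- transfer to a.e. summability via lintegral
  have hmeas' : ∀ t, AEMeasurable (fun ω => ENNReal.ofReal (g t ω)) μ := fun t =>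
    (hgmeas t).aemeasurable.ennreal_ofReal
  have hlin : ∫⁻ ω, ∑' t, ENNReal.ofReal (g t ω) ∂μ = ∑' t, ∫⁻ ω, ENNReal.ofReal (g t ω) ∂μ :=
    lintegral_tsum hmeas'
  have hlin2 : ∀ t, ∫⁻ ω, ENNReal.ofReal (g t ω) ∂μ = ENNReal.ofReal (b t) := fun t =>
    (ofReal_integral_eq_lintegral_ofReal (hgint t) (Eventually.of_forall (hg0 t))).symm
  have hfin : ∫⁻ ω, ∑' t, ENNReal.ofReal (g t ω) ∂μ < ⊤ := by
    rw [hlin]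
    simp_rw [hlin2]
    rw [← ENNReal.ofReal_tsum_of_nonneg hb0 hbsum]
    exact ENNReal.ofReal_lt_top
  have hae := ae_lt_top' (AEMeasurable.ennreal_tsum hmeas') hfin.ne
  filter_upwards [hae] with ω hω
  have h1 : Summable (fun t => (ENNReal.ofReal (g t ω)).toReal) :=
    ENNReal.summable_toReal hω.ne
  convert h1 using 1
  funext t
  rw [ENNReal.toReal_ofReal (hg0 t ω)]


lemma det_conv {d : ℕ} (f : EuclideanSpace ℝ (Fin d) → ℝ) (hcont : Continuous f)
    (Xstar : Set (EuclideanSpace ℝ (Fin d))) (hXstar : Xstar = {x | ∀ y, f x ≤ f y})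
    (D : Set (EuclideanSpace ℝ (Fin d))) (hDX : D ⊆ Xstar) (hdense : Xstar ⊆ closure D)
    (q0 : EuclideanSpace ℝ (Fin d)) (hq0 : q0 ∈ D)
    (u : ℕ → EuclideanSpace ℝ (Fin d))
    (hlim : ∀ q ∈ D, ∃ L, Tendsto (fun t => ‖u t - q‖ ^ 2) atTop (𝓝 L))
    (hfreq : ∀ ε > 0, ∃ᶠ t in atTop, f (u t) - f q0 < ε) :
    ∃ x ∈ Xstar, Tendsto u atTop (𝓝 x) := by
  classical
  have hmin : ∀ x, f q0 ≤ f x := by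
    have := hDX hq0; rw [hXstar] at this; exact this
  -- boundedness
  obtain ⟨L0, hL0⟩ := hlim q0 hq0
  have hbdd : BddAbove (Set.range fun t => ‖u t - q0‖ ^ 2) := hL0.bddAbove_range
  obtain ⟨M, hM⟩ := hbdd
  have hM' : ∀ t, ‖u t - q0‖ ^ 2 ≤ M := fun t => hM ⟨t, rfl⟩
  set R := Real.sqrt M with hR
  have hball : ∀ t, u t ∈ Metric.closedBall q0 R := by
    intro t
    rw [Metric.mem_closedBall, dist_eq_norm]
    have h1 : ‖u t - q0‖ = Real.sqrt (‖u t - q0‖ ^ 2) := (Real.sqrt_sq (norm_nonneg _)).symm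
    rw [h1, hR]
    exact Real.sqrt_le_sqrt (hM' t)
  -- subsequence with f values tending to min
  have hfreq' : ∀ n : ℕ, ∃ᶠ t in atTop, f (u t) - f q0 < 1 / (n + 1) := by
    intro n; exact hfreq _ (by positivity)
  obtain ⟨φ, hφmono, hφ⟩ := Filter.extraction_forall_of_frequently hfreq'
  have hfconv : Tendsto (fun n => f (u (φ n))) atTop (𝓝 (f q0)) := by
    have hup : Tendsto (fun n : ℕ => f q0 + 1 / (n + 1 : ℝ)) atTop (𝓝 (f q0)) := by
      have := tendsto_one_div_add_atTop_nhds_zero_nat (𝕜 := ℝ)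
      simpa using (tendsto_const_nhds (x := f q0)).add this
    apply tendsto_of_tendsto_of_tendsto_of_le_of_le tendsto_const_nhds hup
    · intro n; exact hmin _
    · intro n; exact (by linarith [hφ n] : f (u (φ n)) ≤ f q0 + 1 / (n + 1))
  -- Bolzano-Weierstrass
  obtain ⟨xhat, _, ψ, hψmono, hψ⟩ :=
    tendsto_subseq_of_bounded Metric.isBounded_closedBall (x := fun n => u (φ n))
      (fun n => hball (φ n))
  have hfxhat : f xhat = f q0 := by
    have h1 : Tendsto (fun n => f (u (φ (ψ n)))) atTop (𝓝 (f xhat)) :=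
      (hcont.tendsto xhat).comp hψ
    have h2 : Tendsto (fun n => f (u (φ (ψ n)))) atTop (𝓝 (f q0)) :=
      hfconv.comp hψmono.tendsto_atTop
    exact tendsto_nhds_unique h1 h2
  have hxhatX : xhat ∈ Xstar := by
    rw [hXstar]; intro y; rw [hfxhat]; exact hmin y
  -- limits of distances
  have hkey : ∀ q ∈ D, Tendsto (fun t => ‖u t - q‖ ^ 2) atTop (𝓝 (‖xhat - q‖ ^ 2)) := by
    intro q hq
    obtain ⟨L, hL⟩ := hlim q hq
    have h1 : Tendsto (fun n => ‖u (φ (ψ n)) - q‖ ^ 2) atTop (𝓝 (‖xhat - q‖ ^ 2)) := by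
      have hc : Continuous fun v : EuclideanSpace ℝ (Fin d) => ‖v - q‖ ^ 2 := by continuity
      exact (hc.tendsto xhat).comp hψ
    have h2 : Tendsto (fun n => ‖u (φ (ψ n)) - q‖ ^ 2) atTop (𝓝 L) :=
      hL.comp (hφmono.comp hψmono).tendsto_atTop
    rwa [tendsto_nhds_unique h2 h1] at hL
  refine ⟨xhat, hxhatX, ?_⟩
  rw [Metric.tendsto_atTop]
  intro ε hε
  obtain ⟨q, hqD, hqdist⟩ := Metric.mem_closure_iff.1 (hdense hxhatX) (ε/3) (by linarith)
  have hlt : ‖xhat - q‖ ^ 2 < (ε/2) ^ 2 := by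
    have h1 : ‖xhat - q‖ < ε/2 := by
      rw [← dist_eq_norm]; linarith
    exact pow_lt_pow_left₀ h1 (norm_nonneg _) (by norm_num)
  have hev : ∀ᶠ t in atTop, ‖u t - q‖ ^ 2 < (ε/2) ^ 2 :=
    (hkey q hqD).eventually_lt_const hlt
  rw [eventually_atTop] at hev
  obtain ⟨N, hN⟩ := hev
  refine ⟨N, fun t ht => ?_⟩
  have h1 : ‖u t - q‖ < ε/2 := lt_of_pow_lt_pow_left₀ 2 (by linarith) (hN t ht)
  calc dist (u t) xhat ≤ dist (u t) q + dist q xhat := dist_triangle _ _ _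
    _ < ε/2 + ε/3 := by
        rw [dist_eq_norm, dist_comm q xhat, dist_eq_norm] at *
        exact add_lt_add h1 hqdist
    _ < ε := by linarith


theorem stmt_16 {Ω : Type*} {m0 : MeasurableSpace Ω} (μ : Measure Ω) [IsProbabilityMeasure μ]
    {d : ℕ} (f : EuclideanSpace ℝ (Fin d) → ℝ)
    (hconv : ConvexOn ℝ Set.univ f) (hcont : Continuous f)
    (Xstar : Set (EuclideanSpace ℝ (Fin d)))
    (hXstar : Xstar = {x | ∀ y, f x ≤ f y}) (hne : Xstar.Nonempty)
    (F : Filtration ℕ m0) (y : ℕ → Ω → EuclideanSpace ℝ (Fin d))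
    (hy_adapted : Adapted F y)
    (hy_int : ∀ (t : ℕ) (x : EuclideanSpace ℝ (Fin d)),
      Integrable (fun ω => ‖y t ω - x‖ ^ 2) μ)
    (ζ ξ z : ℕ → ℝ)
    (hζ_nonneg : ∀ t, 0 ≤ ζ t) (hξ_nonneg : ∀ t, 0 ≤ ξ t) (hz_nonneg : ∀ t, 0 ≤ z t)
    (hineq : ∀ t : ℕ, ∀ xstar ∈ Xstar, ∀ᵐ ω ∂μ,
      (μ[fun ω' => ‖y (t + 1) ω' - xstar‖ ^ 2|F t]) ω ≤
        (1 + ζ t) * ‖y t ω - xstar‖ ^ 2 - ξ t * (f (y t ω) - f xstar) + z t)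
    (hζ_sum : Summable ζ) (hξ_div : ¬ Summable ξ) (hz_sum : Summable z) :
    ∀ᵐ ω ∂μ, ∃ xt ∈ Xstar, Tendsto (fun t => y t ω) atTop (nhds xt) := by
  classical
  obtain ⟨D, hDX, hDcount, hdense⟩ :=
    (TopologicalSpace.IsSeparable.of_separableSpace Xstar).exists_countable_dense_subset
  obtain ⟨q0, hq0⟩ : D.Nonempty := by
    obtain ⟨x0, hx0⟩ := hne
    rcases Metric.mem_closure_iff.1 (hdense hx0) 1 one_pos with ⟨q, hq, _⟩
    exact ⟨q, hq⟩
  have hmin : ∀ q ∈ Xstar, ∀ x, f q ≤ f x := by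
    intro q hq; rw [hXstar] at hq; exact hq
  have hVadp : ∀ q : EuclideanSpace ℝ (Fin d),
      Adapted F (fun t ω => ‖y t ω - q‖ ^ 2) := by
    intro q t
    exact ((continuous_pow 2).comp
      ((continuous_id.sub continuous_const).norm)).measurable.comp (hy_adapted t)
  -- Part 1: for each q in D, a.e. convergence of the squared distance
  have hconv1 : ∀ q ∈ D, ∀ᵐ ω ∂μ, ∃ L,
      Tendsto (fun t => ‖y t ω - q‖ ^ 2) atTop (𝓝 L) := by
    intro q hq
    apply rs_conv μ F (fun t ω => ‖y t ω - q‖ ^ 2) (hVadp q) (fun t => hy_int t q)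
      (fun t ω => by positivity) ζ z hζ_nonneg hz_nonneg hζ_sum hz_sum
    intro t
    filter_upwards [hineq t q (hDX hq)] with ω hω
    have h1 : 0 ≤ ξ t * (f (y t ω) - f q) :=
      mul_nonneg (hξ_nonneg t) (by linarith [hmin q (hDX hq) (y t ω)])
    show (μ[fun ω' => ‖y (t + 1) ω' - q‖ ^ 2|F t]) ω ≤ _
    linarith
  have hconv1' : ∀ᵐ ω ∂μ, ∀ q ∈ D, ∃ L,
      Tendsto (fun t => ‖y t ω - q‖ ^ 2) atTop (𝓝 L) := (ae_ball_iff hDcount).2 hconv1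
  -- Part 2: a.e. summability of the ξ-terms
  have hq0X := hDX hq0
  have hsumm : ∀ᵐ ω ∂μ, Summable (fun t => ξ t * (f (y t ω) - f q0)) := by
    apply ae_summable_aux μ F (fun t ω => ‖y t ω - q0‖ ^ 2)
      (fun t ω => ξ t * (f (y t ω) - f q0)) (fun t => hy_int t q0)
      (fun t ω => by positivity)
      (fun t ω => mul_nonneg (hξ_nonneg t) (by linarith [hmin q0 hq0X (y t ω)]))
      (fun t => (((continuous_const.mul ((hcont.sub continuous_const))).measurable.comp
        ((hy_adapted t).mono (F.le t) le_rfl)).aestronglyMeasurable))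
      ζ z hζ_nonneg hz_nonneg hζ_sum hz_sum
    intro t
    filter_upwards [hineq t q0 hq0X] with ω hω
    show ξ t * (f (y t ω) - f q0) ≤ (1 + ζ t) * ‖y t ω - q0‖ ^ 2 + z t -
      (μ[fun ω' => ‖y (t + 1) ω' - q0‖ ^ 2|F t]) ω
    linarith
  -- Part 3: a.e., f values are frequently close to the minimum
  have hfreq : ∀ᵐ ω ∂μ, ∀ ε > 0, ∃ᶠ t in atTop, f (y t ω) - f q0 < ε := by
    filter_upwards [hsumm] with ω hω
    intro ε hε
    by_contra hcon
    rw [not_frequently] at hcon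
    have hcon' : ∀ᶠ t in atTop, ε ≤ f (y t ω) - f q0 := by
      filter_upwards [hcon] with t ht
      linarith [not_lt.1 ht]
    rw [eventually_atTop] at hcon'
    obtain ⟨T, hT⟩ := hcon'
    apply hξ_div
    rw [← summable_nat_add_iff T]
    have hω' : Summable (fun t => ξ (t + T) * (f (y (t + T) ω) - f q0)) :=
      (summable_nat_add_iff T).2 hω
    apply Summable.of_nonneg_of_le (fun t => hξ_nonneg _)
      (fun t => ?_) (hω'.mul_left ε⁻¹)
    have h1 := hT (t + T) (Nat.le_add_left T t)
    have h2 : ε * ξ (t + T) ≤ ξ (t + T) * (f (y (t + T) ω) - f q0) := by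
      rw [mul_comm]
      exact mul_le_mul_of_nonneg_left h1 (hξ_nonneg _)
    rw [inv_mul_eq_div, le_div_iff₀ hε]
    linarith
  -- Combine
  filter_upwards [hconv1', hfreq] with ω h1 h2
  exact det_conv f hcont Xstar hXstar D hDX hdense q0 hq0 (fun t => y t ω) h1 h2
end
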